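/- arXiv:1401.5774 — 5 statements merged into one kernel-verified Lean document; each statement's English description precedes it below -/
import Mathlib

section
/- If a Γ-lattice L is quasi-permutation and L' is a Γ-lattice equivalent to L, then L' is quasi-permutation. -/
/-!
The key input is `Ext¹_Γ(B, M) = 0` for permutation lattices `B` and `M`: an equivariant map
from the kernel of a short exact sequence with cokernel `B` to `M` extends to the middle term.
Since `Hom(B, M)` is again a permutation lattice, this reduces to `H¹(Γ, N) = 0` for a
permutation lattice `N`. For a cocycle `c`, the sum `w = ∑ δ, c δ` satisfies
`|Γ| • c γ = w - γ • w`, so the coordinates of `w` are `Γ`-invariant modulo `|Γ|`; writing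
`w = |Γ| • q + r` with `r` the invariant vector of remainders gives `c γ = q - γ • q`.

Now let `0 → L → Q → Q' → 0`, `0 → L' → E → P → 0` and `0 → L → E → P' → 0`. Extending
`L → Q` along `L → E` gives `φ : E → Q`, and `(φ, E → P')` embeds `E` into `Q ⊕ P'` with
cokernel `Q'`. Extending `E → P` along this embedding, together with `Q ⊕ P' → Q'`, yields
`0 → L' → Q ⊕ P' → P ⊕ Q' → 0`.
-/

universe u

structure GLat (Γ : Type u) [Group Γ] : Type (u+1) where
  carrier : Type u
  [acg : AddCommGroup carrier]
  [act : DistribMulAction Γ carrier]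
  [free : Module.Free ℤ carrier]
  [fin : Module.Finite ℤ carrier]

attribute [instance] GLat.acg GLat.act GLat.free GLat.fin

instance {Γ : Type u} [Group Γ] : CoeSort (GLat Γ) (Type u) := ⟨GLat.carrier⟩

namespace GLat

variable {Γ : Type u} [Group Γ]

/-- A Γ-equivariant additive map. -/
def Equivariant {L M : GLat Γ} (f : L →+ M) : Prop :=
  ∀ (γ : Γ) (x : L), f (γ • x) = γ • f x

/-- A permutation Γ-lattice: it has a ℤ-basis permuted by Γ. -/
def IsPermutation (P : GLat Γ) : Prop :=
  ∃ (ι : Type u) (b : Module.Basis ι ℤ P.carrier),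
    ∀ γ : Γ, ∃ σ : Equiv.Perm ι, ∀ i, γ • b i = b (σ i)

/-- Short exactness of `0 → L → M → N → 0`. -/
def SES {L M N : GLat Γ} (f : L →+ M) (g : M →+ N) : Prop :=
  Function.Injective f ∧ Function.Surjective g ∧ g.ker = f.range

/-- Quasi-permutation lattice: fits in `0 → L → P → P' → 0` with `P, P'` permutation. -/
def IsQuasiPermutation (L : GLat Γ) : Prop :=
  ∃ (P P' : GLat Γ) (f : L →+ P) (g : P →+ P'),
    IsPermutation P ∧ IsPermutation P' ∧ Equivariant f ∧ Equivariant g ∧ SES f g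

/-- Colliot-Thélène–Sansuc equivalence of Γ-lattices. -/
def LatEquiv (L L' : GLat Γ) : Prop :=
  ∃ (E P P' : GLat Γ) (f : L →+ E) (g : E →+ P)
    (f' : L' →+ E) (g' : E →+ P'),
    IsPermutation P ∧ IsPermutation P' ∧
    Equivariant f ∧ Equivariant g ∧ Equivariant f' ∧ Equivariant g' ∧
    SES f g ∧ SES f' g'

/-- The zero lattice. -/
def zero : GLat Γ := { carrier := PUnit }

/-- Direct sum of two Γ-lattices. -/
def prod (L M : GLat Γ) : GLat Γ := { carrier := L × M }

/-- Quasi-invertible: a direct summand of a quasi-permutation lattice. -/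
def IsQuasiInvertible (L : GLat Γ) : Prop :=
  ∃ M : GLat Γ, IsQuasiPermutation (L.prod M)

end GLat

open Module

namespace Module.Basis

variable {M κ : Type*} [AddCommGroup M]

theorem repr_apply_perm (b : Basis κ ℤ M) {φ : M →ₗ[ℤ] M} {σ : Equiv.Perm κ}
    (hφ : ∀ i, φ (b i) = b (σ i)) (m : M) (i : κ) : b.repr (φ m) (σ i) = b.repr m i := by
  have : Finsupp.lapply (σ i) ∘ₗ b.repr.toLinearMap ∘ₗ φ = Finsupp.lapply i ∘ₗ b.repr.toLinearMap :=
    b.ext fun j => by simp [hφ, Finsupp.single_apply_left σ.injective]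
  exact LinearMap.congr_fun this m

theorem eq_zsmul_add (b : Basis κ ℤ M) (n : ℤ) (m : M) :
    m = n • b.repr.symm ((b.repr m).mapRange (· / n) (by simp)) +
      b.repr.symm ((b.repr m).mapRange (· % n) (by simp)) := by
  apply b.repr.injective
  ext i
  simp [Int.mul_ediv_add_emod]

end Module.Basis

theorem Function.Exact.comp_comp_eq_self {R A Z B M : Type*} [Ring R] [AddCommGroup A]
    [AddCommGroup Z] [AddCommGroup B] [AddCommGroup M] [Module R A] [Module R Z] [Module R B]
    [Module R M] {f : A →ₗ[R] Z} {g : Z →ₗ[R] B} (hfg : Function.Exact f g) {s : B →ₗ[R] Z}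
    (hs : g ∘ₗ s = LinearMap.id) {φ : Z →ₗ[R] M} (hφ : φ ∘ₗ f = 0) : φ ∘ₗ s ∘ₗ g = φ := by
  ext z
  obtain ⟨a, ha⟩ := (hfg (z - s (g z))).mp (by simp [← LinearMap.comp_apply g s, hs])
  have := LinearMap.congr_fun hφ a
  simp only [LinearMap.comp_apply, ha, map_sub, LinearMap.zero_apply] at this
  exact (sub_eq_zero.mp this).symm

namespace Representation

variable {Γ M κ : Type*} [Group Γ] [AddCommGroup M]

def PermutesBasis (ρ : Representation ℤ Γ M) (b : Basis κ ℤ M) : Prop :=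
  ∀ γ, ∃ σ : Equiv.Perm κ, ∀ i, ρ γ (b i) = b (σ i)

theorem PermutesBasis.inv_apply {ρ : Representation ℤ Γ M} {b : Basis κ ℤ M} {γ : Γ}
    {σ : Equiv.Perm κ} (hσ : ∀ i, ρ γ (b i) = b (σ i)) (i : κ) : ρ γ⁻¹ (b (σ i)) = b i := by
  rw [← hσ, ← Module.End.mul_apply, ← map_mul, inv_mul_cancel, map_one, Module.End.one_apply]

theorem exists_eq_sub_of_permutesBasis [Fintype Γ] {ρ : Representation ℤ Γ M} {b : Basis κ ℤ M}
    (hb : PermutesBasis ρ b) {c : Γ → M} (hc : ∀ γ δ, c (γ * δ) = c γ + ρ γ (c δ)) :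
    ∃ a, ∀ γ, c γ = ρ γ a - a := by
  set n : ℤ := (Fintype.card Γ : ℤ)
  set w := ∑ δ, c δ
  have hw : ∀ γ, ρ γ w = w - n • c γ := fun γ => by
    have : ∑ δ, c (γ * δ) = w := Fintype.sum_equiv (Equiv.mulLeft γ) _ _ (fun _ => rfl)
    simp only [hc, Finset.sum_add_distrib, Finset.sum_const, Finset.card_univ, ← map_sum] at this
    rw [eq_sub_iff_add_eq, natCast_zsmul, add_comm]
    exact this
  set q := b.repr.symm ((b.repr w).mapRange (· / n) (by simp))
  set r := b.repr.symm ((b.repr w).mapRange (· % n) (by simp))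
  have hwqr : w = n • q + r := b.eq_zsmul_add n w
  have hr : ∀ γ, ρ γ r = r := fun γ => by
    obtain ⟨σ, hσ⟩ := hb γ
    apply b.repr.injective
    ext j
    obtain ⟨i, rfl⟩ := σ.surjective j
    have hcong := b.repr_apply_perm hσ w i
    rw [hw, map_sub, map_zsmul] at hcong
    simp only [b.repr_apply_perm hσ, r, LinearEquiv.apply_symm_apply, Finsupp.mapRange_apply]
    rw [← hcong]
    simp [Int.sub_mul_emod_self_left]
  have hn : n ≠ 0 := by simp [n]
  have := Module.Free.of_basis b
  refine ⟨-q, fun γ => smul_right_injective M hn ?_⟩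
  have hγ := hw γ
  rw [hwqr, map_add, hr, map_zsmul] at hγ
  rw [map_neg]
  linear_combination (norm := module) hγ

theorem PermutesBasis.linHom {ι₁ ι₂ M₁ M₂ : Type*} [AddCommGroup M₁] [AddCommGroup M₂]
    [Fintype ι₁] [Fintype ι₂] [DecidableEq ι₁]
    {ρ₁ : Representation ℤ Γ M₁} {ρ₂ : Representation ℤ Γ M₂} {b₁ : Basis ι₁ ℤ M₁}
    {b₂ : Basis ι₂ ℤ M₂} (h₁ : PermutesBasis ρ₁ b₁) (h₂ : PermutesBasis ρ₂ b₂) :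
    PermutesBasis (ρ₁.linHom ρ₂) (b₁.linearMap b₂) := fun γ => by
  obtain ⟨σ₁, hσ₁⟩ := h₁ γ
  obtain ⟨σ₂, hσ₂⟩ := h₂ γ
  refine ⟨σ₂.prodCongr σ₁, fun ⟨j, i⟩ => b₁.ext fun k => ?_⟩
  obtain ⟨k, rfl⟩ := σ₁.surjective k
  simp [linHom_apply, PermutesBasis.inv_apply hσ₁, Basis.linearMap_apply_apply, σ₁.injective.eq_iff]
  split_ifs <;> simp [hσ₂]

variable {V V' W : Type*} [AddCommGroup V] [AddCommGroup V'] [AddCommGroup W]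
  {ρ : Representation ℤ Γ V} {ρ' : Representation ℤ Γ V'} {τ : Representation ℤ Γ W}

theorem apply_apply_of_linHom_apply_eq_self {γ : Γ} {φ : V →ₗ[ℤ] W}
    (h : ρ.linHom τ γ φ = φ) (v : V) : φ (ρ γ v) = τ γ (φ v) := by
  conv_lhs => rw [← h]
  simp [linHom_apply, ← Module.End.mul_apply, ← map_mul]

theorem linHom_apply_comp {g : V' →ₗ[ℤ] V} (hg : ∀ γ, g ∘ₗ ρ' γ = ρ γ ∘ₗ g) (γ : Γ)
    (φ : V →ₗ[ℤ] W) : ρ'.linHom τ γ (φ ∘ₗ g) = ρ.linHom τ γ φ ∘ₗ g := by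
  simp only [linHom_apply, LinearMap.comp_assoc, hg]

end Representation

namespace GLat

variable {Γ : Type u} [Group Γ]

abbrev rep (L : GLat Γ) : Representation ℤ Γ L := Representation.ofDistribMulAction ℤ Γ L

theorem Equivariant.comp {L M N : GLat Γ} {f : L →+ M} {g : M →+ N} (hg : Equivariant g)
    (hf : Equivariant f) : Equivariant (g.comp f) := fun γ x => by
  simp [hf γ x, hg γ (f x)]

theorem Equivariant.prod {L M N : GLat Γ} {f : L →+ M} {g : L →+ N} (hf : Equivariant f)
    (hg : Equivariant g) : Equivariant (M := M.prod N) (f.prod g) := fun γ x =>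
  Prod.ext (hf γ x) (hg γ x)

theorem Equivariant.comp_rep {L M : GLat Γ} {f : L →+ M} (hf : Equivariant f) (γ : Γ) :
    f.toIntLinearMap ∘ₗ L.rep γ = M.rep γ ∘ₗ f.toIntLinearMap :=
  LinearMap.ext (hf γ)

theorem IsPermutation.prod {L M : GLat Γ} (hL : L.IsPermutation) (hM : M.IsPermutation) :
    (L.prod M).IsPermutation := by
  obtain ⟨ι, b, hb⟩ := hL
  obtain ⟨κ, c, hc⟩ := hM
  refine ⟨ι ⊕ κ, b.prod c, fun γ => ?_⟩
  obtain ⟨σ, hσ⟩ := hb γ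
  obtain ⟨τ, hτ⟩ := hc γ
  refine ⟨Equiv.sumCongr σ τ, ?_⟩
  rintro (i | j)
  · change γ • ((b.prod c) (.inl i) : L × M) = (b.prod c) (.inl (σ i))
    simp [hσ]
  · change γ • ((b.prod c) (.inr j) : L × M) = (b.prod c) (.inr (τ j))
    simp [hτ]

theorem IsPermutation.exists_permutesBasis {P : GLat Γ} (hP : P.IsPermutation) :
    ∃ (ι : Type u) (_ : Fintype ι) (b : Basis ι ℤ P), P.rep.PermutesBasis b := by
  obtain ⟨ι, b, hb⟩ := hP
  have := Module.Finite.finite_basis b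
  exact ⟨ι, .ofFinite ι, b, hb⟩

theorem SES.exact {L M N : GLat Γ} {f : L →+ M} {g : M →+ N} (hfg : SES f g) :
    Function.Exact f g := fun z => by
  simpa using SetLike.ext_iff.mp hfg.2.2 z

theorem SES.apply_apply_eq_zero {L M N : GLat Γ} {f : L →+ M} {g : M →+ N} (hfg : SES f g)
    (x : L) : g (f x) = 0 :=
  hfg.exact.apply_apply_eq_zero x

theorem exists_equivariant_extension [Fintype Γ] {A Z B M : GLat Γ} {f : A →+ Z} {g : Z →+ B}
    (hfg : SES f g) (hf : Equivariant f) (hg : Equivariant g) (hB : B.IsPermutation)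
    (hM : M.IsPermutation) {h : A →+ M} (hh : Equivariant h) :
    ∃ h' : Z →+ M, Equivariant h' ∧ h'.comp f = h := by
  classical
  obtain ⟨ι, _, bB, hbB⟩ := hB.exists_permutesBasis
  obtain ⟨κ, _, bM, hbM⟩ := hM.exists_permutesBasis
  have hsurj : Function.Surjective g.toIntLinearMap := hfg.2.1
  obtain ⟨s, hs⟩ := Module.projective_lifting_property g.toIntLinearMap LinearMap.id hsurj
  obtain ⟨r, hr⟩ : ∃ r : Z →ₗ[ℤ] A, r ∘ₗ f.toIntLinearMap = LinearMap.id :=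
    ((hfg.exact.split_tfae hfg.1 hsurj).out 0 1).mp (Exists.intro s hs)
  set act := Z.rep.linHom M.rep
  set h₀ := h.toIntLinearMap ∘ₗ r
  set c := fun γ => act γ h₀ - h₀
  have hr' : ∀ x, r (f x) = x := LinearMap.congr_fun hr
  have hc : ∀ γ, c γ ∘ₗ f.toIntLinearMap = 0 := fun γ => by
    ext x
    simp [c, act, h₀, Representation.linHom_apply, ← hf γ⁻¹ x, hr', hh γ⁻¹ x]
  set d := fun γ => c γ ∘ₗ s
  have hdc : ∀ γ, d γ ∘ₗ g.toIntLinearMap = c γ := fun γ => hfg.exact.comp_comp_eq_self hs (hc γ)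
  have hd : ∀ γ δ, d (γ * δ) = d γ + B.rep.linHom M.rep γ (d δ) := fun γ δ => by
    rw [← LinearMap.cancel_right hsurj, LinearMap.add_comp,
      ← Representation.linHom_apply_comp hg.comp_rep, hdc, hdc, hdc]
    simp only [c, map_mul, Module.End.mul_apply, map_sub]
    abel
  obtain ⟨a, ha⟩ := Representation.exists_eq_sub_of_permutesBasis (hbB.linHom hbM) hd
  set h' := h₀ - a ∘ₗ g.toIntLinearMap
  have hfix : ∀ γ, act γ h' = h' := fun γ => by
    rw [map_sub, Representation.linHom_apply_comp hg.comp_rep, ← sub_eq_zero,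
      eq_add_of_sub_eq (ha γ).symm, LinearMap.add_comp, hdc]
    simp only [c, h']
    abel
  refine ⟨h'.toAddMonoidHom, fun γ x =>
    Representation.apply_apply_of_linHom_apply_eq_self (hfix γ) x, ?_⟩
  ext x
  simp [h', h₀, hr', show ∀ x, g (f x) = 0 from hfg.exact.apply_apply_eq_zero]

theorem exists_equivariant_descent {A Z B N : GLat Γ} {f : A →+ Z} {g : Z →+ B}
    (hfg : SES f g) (hg : Equivariant g) {h : Z →+ N} (hh : Equivariant h) (hhf : h.comp f = 0) :
    ∃ χ : B →+ N, Equivariant χ ∧ χ.comp g = h := by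
  have hker : g.ker ≤ h.ker := fun z hz => by
    obtain ⟨x, rfl⟩ := (hfg.exact z).mp hz
    exact DFunLike.congr_fun hhf x
  set χ := g.liftOfSurjective hfg.2.1 ⟨h, hker⟩
  have hχ : ∀ z, χ (g z) = h z := g.liftOfRightInverse_comp_apply _ _ _
  refine ⟨χ, fun γ y => ?_, AddMonoidHom.ext hχ⟩
  obtain ⟨z, rfl⟩ := hfg.2.1 y
  rw [← hg, hχ, hχ, hh]

theorem exists_ses_prod_of_comp_eq {L E P' Q Q' : GLat Γ} {f : L →+ E} {g : E →+ P'}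
    {u : L →+ Q} {v : Q →+ Q'} (hfg : SES f g) (huv : SES u v) (hg : Equivariant g)
    (hv : Equivariant v) {φ : E →+ Q} (hφ : Equivariant φ) (hφu : φ.comp f = u) :
    ∃ ψ : Q.prod P' →+ Q', Equivariant ψ ∧ SES (M := Q.prod P') (φ.prod g) ψ := by
  have hφu' : ∀ l, φ (f l) = u l := DFunLike.congr_fun hφu
  obtain ⟨χ, hχ, hχg⟩ := exists_equivariant_descent hfg hg (hv.comp hφ)
    (AddMonoidHom.ext fun l => by simp [hφu', huv.apply_apply_eq_zero])
  have hχg' : ∀ e, χ (g e) = v (φ e) := DFunLike.congr_fun hχg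
  refine ⟨v.comp (AddMonoidHom.fst Q P') - χ.comp (AddMonoidHom.snd Q P'),
    fun γ x => ?_, ?_, fun y => ?_, SetLike.ext fun ⟨q, p⟩ => ?_⟩
  · change v (γ • x.1) - χ (γ • x.2) = γ • (v x.1 - χ x.2)
    rw [hv, hχ, smul_sub]
  · refine (injective_iff_map_eq_zero _).mpr fun e he => ?_
    obtain ⟨l, rfl⟩ := (hfg.exact e).mp (congrArg Prod.snd he)
    have : u l = 0 := (hφu' l).symm.trans (congrArg Prod.fst he)
    rw [huv.1 (this.trans (map_zero u).symm), map_zero]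
  · obtain ⟨q, rfl⟩ := huv.2.1 y
    exact ⟨(q, 0), show v q - χ 0 = v q by simp⟩
  · change v q - χ p = 0 ↔ ∃ e, (φ e, g e) = (q, p)
    refine ⟨fun h => ?_, fun ⟨e, he⟩ => ?_⟩
    · obtain ⟨e, rfl⟩ := hfg.2.1 p
      obtain ⟨l, hl⟩ := (huv.exact (q - φ e)).mp (by rwa [map_sub, ← hχg'])
      exact ⟨e + f l, by simp [hφu', hl, hfg.apply_apply_eq_zero]⟩
    · obtain ⟨rfl, rfl⟩ := Prod.mk.inj he
      rw [hχg', sub_self]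

theorem SES.comp_prod {L E X P Q : GLat Γ} {f : L →+ E} {g : E →+ P} {ι : E →+ X}
    {ψ : X →+ Q} (hfg : SES f g) (hιψ : SES ι ψ) {ρ : X →+ P} (hρ : ρ.comp ι = g) :
    SES (N := P.prod Q) (ι.comp f) (ρ.prod ψ) := by
  have hρ' : ∀ e, ρ (ι e) = g e := DFunLike.congr_fun hρ
  refine ⟨hιψ.1.comp hfg.1, fun ⟨p, q⟩ => ?_, SetLike.ext fun x => ?_⟩
  · obtain ⟨x, rfl⟩ := hιψ.2.1 q
    obtain ⟨e, he⟩ := hfg.2.1 (p - ρ x)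
    exact ⟨x + ι e, show (ρ (x + ι e), ψ (x + ι e)) = (p, ψ x) by
      simp [hρ', he, hιψ.apply_apply_eq_zero]⟩
  · change (ρ x, ψ x) = (0, 0) ↔ ∃ l, ι (f l) = x
    refine ⟨fun h => ?_, fun ⟨l, hl⟩ => ?_⟩
    · obtain ⟨hρx, hψx⟩ := Prod.mk.inj h
      obtain ⟨e, rfl⟩ := (hιψ.exact x).mp hψx
      obtain ⟨l, rfl⟩ := (hfg.exact e).mp (by rwa [← hρ'])
      exact ⟨l, rfl⟩
    · simp [← hl, hρ', hfg.apply_apply_eq_zero, hιψ.apply_apply_eq_zero]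

end GLat

/-- If L is quasi-permutation and L' is equivalent to L, then L' is quasi-permutation. -/
theorem quasiPermutation_of_latEquiv {Γ : Type u} [Group Γ] [Fintype Γ]
    (L L' : GLat Γ) (hL : L.IsQuasiPermutation) (h : L'.LatEquiv L) :
    L'.IsQuasiPermutation := by
  obtain ⟨Q, Q', u, v, hQ, hQ', hu, hv, huv⟩ := hL
  obtain ⟨E, P, P', f, g, f', g', hP, hP', hf, hg, hf', hg', hfg, hf'g'⟩ := h
  obtain ⟨φ, hφ, hφu⟩ := GLat.exists_equivariant_extension hf'g' hf' hg' hP' hQ hu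
  obtain ⟨ψ, hψ, hιψ⟩ := GLat.exists_ses_prod_of_comp_eq hf'g' huv hg' hv hφ hφu
  obtain ⟨ρ, hρ, hρι⟩ := GLat.exists_equivariant_extension hιψ (hφ.prod hg') hψ hQ' hP hg
  exact ⟨Q.prod P', P.prod Q', _, _, hQ.prod hP', hP.prod hQ', (hφ.prod hg').comp hf,
    hρ.prod hψ, hfg.comp_prod hιψ hρι⟩
end

section
/- Let n ≥ 3 be odd, let P be the weight lattice of type A_{n-1}, realized as the quotient of ℤⁿ with generators e₁,…,e_n subject to e₁+⋯+e_n = 0, and let A = S_n × S₂ act on P where S_n permutes the e_i and the nontrivial element of S₂ sends each e_i to −e_i. Then there is a short exact sequence of A-lattices 0 → M' → M → P → 0 with both M and M' permutation A-lattices; in particular P is the quotient of a permutation lattice by a permutation sublattice. -/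
/-!
Write `n = 2k + 1`. Let `M` have basis `s_i, t_i, u` and map it onto `P` by `s_i ↦ e_i`,
`t_i ↦ -e_i`, `u ↦ 0`. An `x ∈ M` lies in the kernel iff `x(s_i) - x(t_i)` is a constant `c`.
Such an `x` is `∑ (x(t_i) - b) ρ̃_i + (b + c) σ̃ + b τ̃` with `ρ̃_i = s_i + t_i + u`,
`σ̃ = ∑ s_i + k u`, `τ̃ = ∑ t_i + k u`: the `u`-coordinate forces
`(n - 2k) b = ∑ x(t_i) + k c - x(u)`, and `n - 2k = 1`, so `b` is an integer. The same
computation with `x = 0` gives injectivity. The `n + 2` elements `ρ̃_i, σ̃, τ̃` are permuted by `A`.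
-/

universe u

open scoped BigOperators

/-- The group `A = Sₙ × S₂`, with `S₂` realized as `ℤˣ = {±1}`. -/
abbrev AGroup (n : ℕ) := Equiv.Perm (Fin n) × ℤˣ

/-- The action of `A = Sₙ × S₂` on `ℤⁿ`: `Sₙ` permutes the generators `e₁, …, e_n` and
the nontrivial element of `S₂` sends each `e_i` to `−e_i`. -/
def aAct (n : ℕ) (a : AGroup n) (x : Fin n → ℤ) : Fin n → ℤ :=
  fun i => (a.2 : ℤ) * x (a.1.symm i)

namespace GLat

def ofMulAction (Γ ι : Type) [Group Γ] [MulAction Γ ι] [Finite ι] : GLat Γ where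
  carrier := ι → ℤ
  act := { arrowAction with smul_zero _ := rfl, smul_add _ _ _ := rfl }

variable {Γ ι : Type} [Group Γ] [MulAction Γ ι] [Finite ι]

theorem isPermutation_ofMulAction : (ofMulAction Γ ι).IsPermutation := by
  classical
  refine ⟨ι, Pi.basisFun ℤ ι, fun γ => ⟨MulAction.toPerm γ, fun i => funext fun j => ?_⟩⟩
  change (Pi.single i 1 : ι → ℤ) (γ⁻¹ • j) = (Pi.single (γ • i) 1 : ι → ℤ) j
  rw [Pi.single_apply, Pi.single_apply, inv_smul_eq_iff]

end GLat

namespace AGroup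

variable (n : ℕ)

instance : MulAction (AGroup n) (Fin n) := MulAction.compHom _ (MonoidHom.fst _ _)

instance : MulAction (AGroup n) ℤˣ := MulAction.compHom _ (MonoidHom.snd _ _)

variable {n}

@[simp] theorem smul_fin (a : AGroup n) (i : Fin n) : a • i = a.1 i := rfl

@[simp] theorem smul_units (a : AGroup n) (η : ℤˣ) : a • η = a.2 * η := rfl

end AGroup

open GLat

section Resolution

variable (n : ℕ)

/-- `ρ̃_i ↦ s_i + t_i + u`, `σ̃ ↦ ∑ s_i + k u`, `τ̃ ↦ ∑ t_i + k u`, in the encoding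
`s_i = some (i, 1)`, `t_i = some (i, -1)`, `u = none`, `ρ̃_i = inl i`, `σ̃ = inr 1`, `τ̃ = inr (-1)`. -/
def resolutionInclusion (k : ℤ) : (Fin n ⊕ ℤˣ → ℤ) →+ (Option (Fin n × ℤˣ) → ℤ) where
  toFun y
    | some (i, η) => y (.inl i) + y (.inr η)
    | none => ∑ i, y (.inl i) + k * ∑ η, y (.inr η)
  map_zero' := by ext (_ | _) <;> simp
  map_add' y z := by ext (_ | _) <;> simp [Finset.sum_add_distrib] <;> ring

/-- `s_i ↦ e_i`, `t_i ↦ -e_i`, `u ↦ 0`. -/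
def resolutionDifference : (Option (Fin n × ℤˣ) → ℤ) →+ (Fin n → ℤ) where
  toFun x i := ∑ η : ℤˣ, η * x (some (i, η))
  map_zero' := by ext; simp
  map_add' x y := by ext; simp [mul_add, Finset.sum_add_distrib]

variable {n}

theorem resolutionInclusion_some (k : ℤ) (y : Fin n ⊕ ℤˣ → ℤ) (i : Fin n) (η : ℤˣ) :
    resolutionInclusion n k y (some (i, η)) = y (.inl i) + y (.inr η) := rfl

theorem resolutionInclusion_none (k : ℤ) (y : Fin n ⊕ ℤˣ → ℤ) :
    resolutionInclusion n k y none = ∑ i, y (.inl i) + k * (y (.inr 1) + y (.inr (-1))) := by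
  change ∑ i, y (.inl i) + k * ∑ η, y (.inr η) = _
  rw [UnitsInt.univ, Finset.sum_pair (by decide)]

theorem resolutionDifference_apply (x : Option (Fin n × ℤˣ) → ℤ) (i : Fin n) :
    resolutionDifference n x i = x (some (i, 1)) - x (some (i, -1)) := by
  change ∑ η : ℤˣ, (η : ℤ) * x (some (i, η)) = _
  rw [UnitsInt.univ, Finset.sum_pair (by decide)]
  simp only [Units.val_one, one_mul, Units.val_neg, neg_mul, sub_eq_add_neg]

theorem resolutionInclusion_equivariant (k : ℤ) :
    Equivariant (L := ofMulAction (AGroup n) (Fin n ⊕ ℤˣ))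
      (M := ofMulAction (AGroup n) (Option (Fin n × ℤˣ)))
      (resolutionInclusion n k) := by
  intro a (y : Fin n ⊕ ℤˣ → ℤ)
  funext j
  rcases j with _ | ⟨i, η⟩
  · change ∑ i, y (a⁻¹ • .inl i) + k * ∑ η, y (a⁻¹ • .inr η) =
      ∑ i, y (.inl i) + k * ∑ η, y (.inr η)
    exact congrArg₂ (· + k * ·) (Equiv.sum_comp (MulAction.toPerm a⁻¹) fun i => y (.inl i))
      (Equiv.sum_comp (MulAction.toPerm a⁻¹) fun η => y (.inr η))
  · rfl

theorem resolutionDifference_smul (a : AGroup n)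
    (x : ofMulAction (AGroup n) (Option (Fin n × ℤˣ))) :
    resolutionDifference n (a • x) = aAct n a (resolutionDifference n x) := by
  funext i
  change ∑ η : ℤˣ, (η : ℤ) * x (a⁻¹ • some (i, η)) =
    a.2 * ∑ η : ℤˣ, (η : ℤ) * x (some (a.1.symm i, η))
  rw [Finset.mul_sum]
  refine Fintype.sum_equiv (Equiv.mulLeft a.2⁻¹) _ _ fun η => ?_
  simp [Equiv.Perm.inv_def, ← mul_assoc]

theorem resolutionInclusion_injective {k : ℤ} (hk : (n : ℤ) = 2 * k + 1) :
    Function.Injective (resolutionInclusion n k) := by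
  refine (injective_iff_map_eq_zero _).2 fun y hy => ?_
  have hρ (i : Fin n) (η : ℤˣ) : y (.inl i) = -y (.inr η) := by
    have := congrFun hy (some (i, η))
    rw [resolutionInclusion_some, Pi.zero_apply] at this
    linarith
  have i₀ : Fin n := ⟨0, by omega⟩
  have hστ : y (.inr 1) = y (.inr (-1)) := by linarith [hρ i₀ 1, hρ i₀ (-1)]
  have hσ : y (.inr 1) = 0 := by
    have := congrFun hy none
    simp only [resolutionInclusion_none, hρ _ 1, Finset.sum_const, Finset.card_univ,
      Fintype.card_fin, nsmul_eq_mul, Pi.zero_apply] at this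
    linear_combination -this - y (.inr 1) * hk - k * hστ
  funext j
  rcases j with i | η
  · simp [hρ i 1, hσ]
  · rcases Int.units_eq_one_or η with rfl | rfl
    · exact hσ
    · rw [← hστ, hσ]; rfl

theorem resolutionDifference_surjective : Function.Surjective (resolutionDifference n) :=
  fun z => ⟨fun | some (i, η) => if η = 1 then z i else 0 | none => 0,
    funext fun i => by simp [resolutionDifference_apply]⟩

theorem comap_resolutionDifference_zmultiples {k : ℤ} (hk : (n : ℤ) = 2 * k + 1) :
    (AddSubgroup.zmultiples (fun _ => 1 : Fin n → ℤ)).comap (resolutionDifference n) =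
      (resolutionInclusion n k).range := by
  ext x
  simp only [AddSubgroup.mem_comap, AddSubgroup.mem_zmultiples_iff, AddMonoidHom.mem_range]
  constructor
  · rintro ⟨c, hc⟩
    have hs (i : Fin n) : x (some (i, 1)) = x (some (i, -1)) + c := by
      have := congrFun hc i
      simp only [resolutionDifference_apply, Pi.smul_apply, smul_eq_mul, mul_one] at this
      linarith
    set b := ∑ i, x (some (i, -1)) + k * c - x none
    refine ⟨fun | .inl i => x (some (i, -1)) - b | .inr η => if η = 1 then b + c else b,
      funext ?_⟩
    rintro (_ | ⟨i, η⟩)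
    · simp only [resolutionInclusion_none, Finset.sum_sub_distrib, Finset.sum_const,
        Finset.card_univ, Fintype.card_fin, Int.nsmul_eq_mul, hk, ↓reduceIte, neg_units_ne_self, b]
      ring
    · rcases Int.units_eq_one_or η with rfl | rfl
      · simp only [resolutionInclusion_some, if_pos, hs]
        ring
      · simp [resolutionInclusion_some]
  · rintro ⟨y, rfl⟩
    exact ⟨y (.inr 1) - y (.inr (-1)), funext fun i => by
      simp [resolutionDifference_apply, resolutionInclusion_some]⟩

end Resolution

theorem weight_lattice_resolution_by_permutation_lattices_general
    (n : ℕ) (hodd : Odd n)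
    (P : GLat (AGroup n)) (p : (Fin n → ℤ) →+ P.carrier)
    (hsurj : Function.Surjective p)
    (hker : p.ker = AddSubgroup.zmultiples (fun _ => (1 : ℤ)))
    (hequi : ∀ (a : AGroup n) (x : Fin n → ℤ), p (aAct n a x) = a • p x) :
    ∃ (M M' : GLat (AGroup n)) (f : M' →+ M) (g : M →+ P),
      M.IsPermutation ∧ M'.IsPermutation ∧
      GLat.Equivariant f ∧ GLat.Equivariant g ∧ GLat.SES f g := by
  obtain ⟨k, hk⟩ := hodd
  have hk : (n : ℤ) = 2 * k + 1 := by exact_mod_cast hk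
  refine ⟨ofMulAction (AGroup n) (Option (Fin n × ℤˣ)), ofMulAction (AGroup n) (Fin n ⊕ ℤˣ),
    resolutionInclusion n k, p.comp (resolutionDifference n), isPermutation_ofMulAction,
    isPermutation_ofMulAction, resolutionInclusion_equivariant k, fun a x => ?_,
    resolutionInclusion_injective hk, hsurj.comp resolutionDifference_surjective, ?_⟩
  · exact (congrArg p (resolutionDifference_smul a x)).trans (hequi a _)
  · exact (AddMonoidHom.comap_ker p _).symm.trans
      (hker ▸ comap_resolutionDifference_zmultiples hk)

/-- Let `n ≥ 3` be odd and let `P` be the weight lattice of type `A_{n-1}`, realized as the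
quotient of `ℤⁿ` (with generators `e₁, …, e_n`) by the relation `e₁ + ⋯ + e_n = 0`, with the
action of `A = Sₙ × S₂` described above.  Then there is a short exact sequence of `A`-lattices
`0 → M' → M → P → 0` with both `M` and `M'` permutation `A`-lattices. -/
theorem weight_lattice_resolution_by_permutation_lattices
    (n : ℕ) (hn3 : 3 ≤ n) (hodd : Odd n)
    (P : GLat (AGroup n)) (p : (Fin n → ℤ) →+ P.carrier)
    (hsurj : Function.Surjective p)
    (hker : p.ker = AddSubgroup.zmultiples (fun _ => (1 : ℤ)))
    (hequi : ∀ (a : AGroup n) (x : Fin n → ℤ), p (aAct n a x) = a • p x) :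
    ∃ (M M' : GLat (AGroup n)) (f : M' →+ M) (g : M →+ P),
      M.IsPermutation ∧ M'.IsPermutation ∧
      GLat.Equivariant f ∧ GLat.Equivariant g ∧ GLat.SES f g :=
  weight_lattice_resolution_by_permutation_lattices_general n hodd P p hsurj hker hequi
end

section
/- Let Γ be a finite group, L a Γ-lattice, and M a finite Γ-module with |Γ|·M = M. Then any surjective homomorphism of ℤ[Γ]-modules L → M is projective in the sense of Roiter, and given two exact sequences 0 → K → L → M → 0 and 0 → K' → L' → M → 0 of Γ-modules with L, L' Γ-lattices, there is an isomorphism of Γ-lattices L ⊕ K' ≅ L' ⊕ K. -/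
universe u

/-- Roiter's notion of a projective surjection: a surjective equivariant `f : L → M` is
projective if every surjective equivariant map from a `Γ`-lattice onto `M` factors
`f` through it. -/
def RoiterProjective {Γ : Type u} [Group Γ] (L : GLat Γ) (M : Type u)
    [AddCommGroup M] [DistribMulAction Γ M] (f : L.carrier →+ M) : Prop :=
  ∀ (B : GLat Γ) (g : B.carrier →+ M),
    (∀ (γ : Γ) (b : B.carrier), g (γ • b) = γ • g b) → Function.Surjective g →
      ∃ h : L.carrier →+ B.carrier,
        GLat.Equivariant h ∧ g.comp h = f

/-!
Let `ψ` be the inverse of multiplication by `|Γ|` on `M`; it is `Γ`-equivariant. Given a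
surjection `g : B → M`, lift `ψ ∘ f` through `g` ℤ-linearly (`L` is ℤ-free) and average the lift
over `Γ`: the average is equivariant and lifts `|Γ| • ψ ∘ f = f`.

With such lifts `h : L → L'` and `h' : L' → L` over `M`, both `L ⊕ K'` and `L' ⊕ K` are identified
with the fibre product `L ×_M L'`, via `(l, k') ↦ (l, h l + ι' k')` and `(l', k) ↦ (h' l' + ι k, l')`.
-/

open Function

section Averaging

variable (Γ : Type*) {A B : Type*} [Group Γ] [Fintype Γ] [AddCommMonoid A] [AddCommMonoid B]
  [DistribMulAction Γ A] [DistribMulAction Γ B]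

def AddMonoidHom.average (h : A →+ B) : A →+ B :=
  ∑ γ : Γ, (DistribSMul.toAddMonoidHom B γ).comp (h.comp (DistribSMul.toAddMonoidHom A γ⁻¹))

variable {Γ}

theorem AddMonoidHom.average_apply (h : A →+ B) (x : A) :
    h.average Γ x = ∑ γ : Γ, γ • h (γ⁻¹ • x) := by
  simp [AddMonoidHom.average]

theorem AddMonoidHom.average_smul (h : A →+ B) (δ : Γ) (x : A) :
    h.average Γ (δ • x) = δ • h.average Γ x := by
  rw [average_apply, average_apply, Finset.smul_sum]
  refine Fintype.sum_equiv (Equiv.mulLeft δ⁻¹) _ _ fun γ => ?_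
  simp only [Equiv.coe_mulLeft, smul_smul, mul_inv_rev, inv_inv, mul_inv_cancel_left]

theorem AddMonoidHom.comp_average {M : Type*} [AddCommMonoid M] [DistribMulAction Γ M]
    {g : B →+ M} {h : A →+ B} {φ : A →+ M} (hg : ∀ (γ : Γ) b, g (γ • b) = γ • g b)
    (hφ : ∀ (γ : Γ) x, φ (γ • x) = γ • φ x) (hgh : g.comp h = φ) :
    g.comp (h.average Γ) = Fintype.card Γ • φ := by
  ext x
  have hterm (γ : Γ) : g (γ • h (γ⁻¹ • x)) = φ x := by
    rw [hg, ← AddMonoidHom.comp_apply, hgh, hφ, smul_inv_smul]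
  simp [average_apply, hterm]

end Averaging

theorem exists_equivariant_comp_eq_card_nsmul {Γ L B M : Type*} [Group Γ] [Fintype Γ]
    [AddCommGroup L] [Module.Projective ℤ L] [AddCommGroup B] [AddCommGroup M]
    [DistribMulAction Γ L] [DistribMulAction Γ B] [DistribMulAction Γ M]
    {g : B →+ M} (hg : ∀ (γ : Γ) b, g (γ • b) = γ • g b) (hg_surj : Surjective g)
    {ψ : L →+ M} (hψ : ∀ (γ : Γ) x, ψ (γ • x) = γ • ψ x) :
    ∃ h : L →+ B, (∀ (γ : Γ) x, h (γ • x) = γ • h x) ∧ g.comp h = Fintype.card Γ • ψ := by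
  obtain ⟨h₀, hh₀⟩ := Module.projective_lifting_property g.toIntLinearMap ψ.toIntLinearMap hg_surj
  exact ⟨h₀.toAddMonoidHom.average Γ, AddMonoidHom.average_smul _,
    AddMonoidHom.comp_average hg hψ (congrArg LinearMap.toAddMonoidHom hh₀)⟩

theorem exists_equivariant_nsmul_rightInverse {Γ M : Type*} [Monoid Γ] [AddCommGroup M]
    [DistribMulAction Γ M] [Finite M] {n : ℕ} (hn : ∀ m : M, ∃ m', n • m' = m) :
    ∃ ψ : M →+ M, (∀ (γ : Γ) m, ψ (γ • m) = γ • ψ m) ∧ ∀ m, n • ψ m = m := by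
  have hbij : Bijective (nsmulAddMonoidHom n : M →+ M) :=
    ⟨Finite.injective_iff_surjective.2 hn, hn⟩
  let e := AddEquiv.ofBijective _ hbij
  have he (m : M) : n • e.symm m = m := e.apply_symm_apply m
  refine ⟨e.symm.toAddMonoidHom, fun γ m => hbij.1 ?_, he⟩
  change n • e.symm (γ • m) = n • γ • e.symm m
  rw [he, smul_comm, he]

theorem exists_equivariant_addEquiv_of_range_eq {Γ A A' C : Type*} [Monoid Γ] [AddGroup A]
    [AddGroup A'] [AddGroup C] [DistribMulAction Γ A] [DistribMulAction Γ A']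
    [DistribMulAction Γ C] {φ : A →+ C} {φ' : A' →+ C} (hφ_inj : Injective φ)
    (hφ'_inj : Injective φ') (hφ : ∀ (γ : Γ) x, φ (γ • x) = γ • φ x)
    (hφ' : ∀ (γ : Γ) x, φ' (γ • x) = γ • φ' x) (hrange : φ.range = φ'.range) :
    ∃ e : A ≃+ A', ∀ (γ : Γ) x, e (γ • x) = γ • e x := by
  let e : A ≃+ A' := (AddMonoidHom.ofInjective hφ_inj).trans
    ((AddEquiv.addSubgroupCongr hrange).trans (AddMonoidHom.ofInjective hφ'_inj).symm)
  have he (x : A) : φ' (e x) = φ x := by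
    simp [e, AddMonoidHom.apply_ofInjective_symm, AddMonoidHom.ofInjective_apply]
  exact ⟨e, fun γ x => hφ'_inj (by rw [he, hφ, hφ', he])⟩

section Schanuel

variable {Γ K L L' M : Type*} [Monoid Γ] [AddCommGroup K] [AddCommGroup L] [AddCommGroup L']
  [AddCommGroup M] [DistribMulAction Γ K] [DistribMulAction Γ L] [DistribMulAction Γ L']

def schanuelMap (h : L →+ L') (ι : K →+ L') : L × K →+ L × L' :=
  (AddMonoidHom.fst L K).prod (h.comp (AddMonoidHom.fst L K) + ι.comp (AddMonoidHom.snd L K))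

@[simp]
theorem schanuelMap_apply (h : L →+ L') (ι : K →+ L') (x : L × K) :
    schanuelMap h ι x = (x.1, h x.1 + ι x.2) := rfl

theorem schanuelMap_injective (h : L →+ L') {ι : K →+ L'} (hι : Injective ι) :
    Injective (schanuelMap h ι) := by
  rintro ⟨l₁, k₁⟩ ⟨l₂, k₂⟩ heq
  simp only [schanuelMap_apply, Prod.mk.injEq] at heq
  obtain ⟨rfl, h₂⟩ := heq
  exact Prod.ext rfl (hι (add_left_cancel h₂))

theorem schanuelMap_smul {h : L →+ L'} {ι : K →+ L'} (hh : ∀ (γ : Γ) x, h (γ • x) = γ • h x)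
    (hι : ∀ (γ : Γ) x, ι (γ • x) = γ • ι x) (γ : Γ) (x : L × K) :
    schanuelMap h ι (γ • x) = γ • schanuelMap h ι x := by
  simp [hh, hι, smul_add]

theorem mem_range_schanuelMap {h : L →+ L'} {ι : K →+ L'} {f : L →+ M} {f' : L' →+ M}
    (hhf : f'.comp h = f) (hker : f'.ker = ι.range) (p : L × L') :
    p ∈ (schanuelMap h ι).range ↔ f p.1 = f' p.2 := by
  constructor
  · rintro ⟨⟨l, k⟩, rfl⟩
    have hk : f' (ι k) = 0 := by rw [← AddMonoidHom.mem_ker, hker]; exact ⟨k, rfl⟩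
    simp [← hhf, hk]
  · intro hp
    obtain ⟨k, hk⟩ : p.2 - h p.1 ∈ ι.range := by
      rw [← hker, AddMonoidHom.mem_ker, map_sub, ← AddMonoidHom.comp_apply, hhf, hp, sub_self]
    exact ⟨(p.1, k), by simp [hk]⟩

end Schanuel

theorem exists_equivariant_prod_addEquiv_of_lifts {Γ K L K' L' M : Type*} [Monoid Γ]
    [AddCommGroup K] [AddCommGroup L] [AddCommGroup K'] [AddCommGroup L'] [AddCommGroup M]
    [DistribMulAction Γ K] [DistribMulAction Γ L] [DistribMulAction Γ K'] [DistribMulAction Γ L']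
    {ι : K →+ L} {f : L →+ M} {ι' : K' →+ L'} {f' : L' →+ M} {h : L →+ L'} {h' : L' →+ L}
    (hι : ∀ (γ : Γ) x, ι (γ • x) = γ • ι x) (hι' : ∀ (γ : Γ) x, ι' (γ • x) = γ • ι' x)
    (hh : ∀ (γ : Γ) x, h (γ • x) = γ • h x) (hh' : ∀ (γ : Γ) x, h' (γ • x) = γ • h' x)
    (hι_inj : Injective ι) (hker : f.ker = ι.range) (hι'_inj : Injective ι')
    (hker' : f'.ker = ι'.range) (hhf : f'.comp h = f) (hh'f : f.comp h' = f') :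
    ∃ e : (L × K') ≃+ (L' × K), ∀ (γ : Γ) x, e (γ • x) = γ • e x := by
  let swap : L' × L ≃+ L × L' := AddEquiv.prodComm
  refine exists_equivariant_addEquiv_of_range_eq (φ := schanuelMap h ι')
    (φ' := swap.toAddMonoidHom.comp (schanuelMap h' ι)) (schanuelMap_injective h hι'_inj)
    (swap.injective.comp (schanuelMap_injective h' hι_inj)) (schanuelMap_smul hh hι')
    (fun γ x => by simp [swap, schanuelMap_smul hh' hι]) ?_
  ext ⟨l, l'⟩
  rw [AddMonoidHom.range_comp, AddSubgroup.mem_map_equiv, mem_range_schanuelMap hhf hker',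
    mem_range_schanuelMap hh'f hker]
  exact eq_comm

theorem roiterProjective_of_card_nsmul_surjective {Γ : Type u} [Group Γ] [Fintype Γ]
    {M : Type u} [AddCommGroup M] [DistribMulAction Γ M] [Finite M]
    (hM : ∀ m : M, ∃ m' : M, Fintype.card Γ • m' = m) (L : GLat Γ) {f : L.carrier →+ M}
    (hf : ∀ (γ : Γ) x, f (γ • x) = γ • f x) : RoiterProjective L M f := by
  intro B g hg hg_surj
  obtain ⟨ψ, hψ, hψ_inv⟩ := exists_equivariant_nsmul_rightInverse (Γ := Γ) hM
  obtain ⟨h, hh, hgh⟩ := exists_equivariant_comp_eq_card_nsmul hg hg_surj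
    (ψ := ψ.comp f) fun γ x => by simp [hf, hψ]
  exact ⟨h, hh, hgh.trans (AddMonoidHom.ext fun x => hψ_inv (f x))⟩

/-- Roiter's version of Schanuel's lemma.  Let `Γ` be a finite group, `M` a finite
`Γ`-module with `|Γ| ⬝ M = M`.  Then (i) every surjective equivariant homomorphism from a
`Γ`-lattice onto `M` is projective in the sense of Roiter, and (ii) for any two short exact
sequences `0 → K → L → M → 0` and `0 → K' → L' → M → 0` of `Γ`-modules with `L, L'`
`Γ`-lattices, one has `L ⊕ K' ≅ L' ⊕ K` as `Γ`-lattices. -/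
theorem roiter_schanuel {Γ : Type u} [Group Γ] [Fintype Γ]
    (M : Type u) [AddCommGroup M] [DistribMulAction Γ M] [Finite M]
    (hM : ∀ m : M, ∃ m' : M, (Fintype.card Γ) • m' = m) :
    (∀ (L : GLat Γ) (f : L.carrier →+ M),
        (∀ (γ : Γ) (x : L.carrier), f (γ • x) = γ • f x) → Function.Surjective f →
          RoiterProjective L M f) ∧
    (∀ (K L K' L' : GLat Γ)
        (ι : K.carrier →+ L.carrier) (f : L.carrier →+ M)
        (ι' : K'.carrier →+ L'.carrier) (f' : L'.carrier →+ M),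
        GLat.Equivariant ι → GLat.Equivariant ι' →
        (∀ (γ : Γ) (x : L.carrier), f (γ • x) = γ • f x) →
        (∀ (γ : Γ) (x : L'.carrier), f' (γ • x) = γ • f' x) →
        Function.Injective ι → Function.Surjective f → f.ker = ι.range →
        Function.Injective ι' → Function.Surjective f' → f'.ker = ι'.range →
        ∃ e : (L.carrier × K'.carrier) ≃+ (L'.carrier × K.carrier),
          ∀ (γ : Γ) (x : L.carrier × K'.carrier), e (γ • x) = γ • e x) := by
  refine ⟨fun L f hf _ => roiterProjective_of_card_nsmul_surjective hM L hf, ?_⟩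
  intro K L K' L' ι f ι' f' hι hι' hf hf' hι_inj hf_surj hker hι'_inj hf'_surj hker'
  obtain ⟨h, hh, hhf⟩ := roiterProjective_of_card_nsmul_surjective hM L hf L' f' hf' hf'_surj
  obtain ⟨h', hh', hh'f⟩ := roiterProjective_of_card_nsmul_surjective hM L' hf' L f hf hf_surj
  exact exists_equivariant_prod_addEquiv_of_lifts hι hι' hh hh' hι_inj hker hι'_inj hker' hhf hh'f
end

section
/- Let Γ = ℤ/pℤ × ℤ/pℤ for a prime p. Then the Γ-lattice J_Γ (cokernel of the norm map ℤ → ℤ[Γ]) is not quasi-invertible; in particular it is not quasi-permutation and is not a direct summand of any quasi-permutation Γ-lattice. -/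
universe u

open scoped BigOperators

/-!
Write `Ш¹_ω(Γ, A)` for the 1-cocycles `Γ → A` that are coboundaries on every cyclic subgroup,
modulo coboundaries. If `0 → L → P → P' → 0` with `P, P'` permutation lattices, the dual sequence
`0 → P'^∨ → P^∨ → L^∨ → 0` is exact because it splits over `ℤ`; as `H¹(Γ, P^∨) = 0` and
`Ш²_ω(Γ, P'^∨) = 0` for permutation lattices, `Ш¹_ω(Γ, L^∨) = 0`, and this passes to direct
summands. But `Ш¹_ω(Γ, J_Γ^∨) ≠ 0` whenever the exponent `e` of `Γ` is smaller than `|Γ|`, as for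
`Γ = (ℤ/p)²`: the cocycle `γ ↦ (π x ↦ e (x_γ - x_1))` is a coboundary on each cyclic subgroup `C`
(of `π x ↦ e x_1 - (e / |C|) ∑_{c ∈ C} x_c`), but not on `Γ`, since that would force `|Γ| ∣ e`.
-/

open Function groupCohomology

section Cyclic

variable {G A : Type*} [Group G] [AddCommGroup A] [DistribMulAction G A]

/-- The condition defining Sansuc's `Ш¹_ω(G, A)`. -/
def IsCoboundary₁OnCyclic (f : G → A) : Prop :=
  ∀ g : G, IsCoboundary₁ fun h : Subgroup.zpowers g => f h

/-- The condition defining Sansuc's `Ш²_ω(G, A)`. -/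
def IsCoboundary₂OnCyclic (c : G × G → A) : Prop :=
  ∀ g : G, IsCoboundary₂ fun h : Subgroup.zpowers g × Subgroup.zpowers g => c (h.1, h.2)

end Cyclic

section OrbitCocycle

variable {G ι M : Type*} [Group G] [MulAction G ι] [AddCommGroup M]

/-- `H¹` of `G` with coefficients in `ι → M`, acted on by `(g • w) i = w (g⁻¹ • i)`:
a cocycle that is a coboundary at each single element is a coboundary. -/
theorem exists_forall_eq_comp_sub_of_forall_exists (X : G → ι → M)
    (hX : ∀ g h i, X (g * h) i = X g i + X h (g⁻¹ • i))
    (hloc : ∀ g, ∃ w : ι → M, ∀ i, X g i = w (g⁻¹ • i) - w i) :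
    ∃ w : ι → M, ∀ g i, X g i = w (g⁻¹ • i) - w i := by
  have fixed : ∀ g i, g • i = i → X g i = 0 := fun g i hgi => by
    obtain ⟨w, hw⟩ := hloc g
    rw [hw, inv_smul_eq_iff.mpr hgi.symm, sub_self]
  have same_image : ∀ α β r, α • r = β • r → X α (α • r) = X β (α • r) := fun α β r h => by
    have hfix : (β⁻¹ * α) • r = r := by rw [mul_smul, h, inv_smul_smul]
    have := hX β (β⁻¹ * α) (α • r)
    rwa [mul_inv_cancel_left, h, inv_smul_smul, fixed _ _ hfix, add_zero, ← h] at this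
  let rep (i : ι) : ι := (Quotient.mk (MulAction.orbitRel G ι) i).out
  have hrep : ∀ i, ∃ g : G, g • rep i = i := fun i =>
    (MulAction.orbitRel G ι).symm (Quotient.mk_out (s := MulAction.orbitRel G ι) i)
  choose τ hτ using hrep
  refine ⟨fun i => -X (τ i) i, fun g i => ?_⟩
  set j := g⁻¹ • i
  have hrep_eq : rep j = rep i :=
    congrArg Quotient.out (Quotient.sound (s := MulAction.orbitRel G ι) ⟨g⁻¹, rfl⟩)
  have hτj : τ j • rep i = j := hrep_eq ▸ hτ j
  have hgτ : (g * τ j) • rep i = i := by rw [mul_smul, hτj, smul_inv_smul]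
  have key := same_image (g * τ j) (τ i) (rep i) (by rw [hgτ, hτ])
  rw [hgτ, hX] at key
  show X g i = -X (τ j) j - -X (τ i) i
  rw [← key]
  abel

end OrbitCocycle

theorem Module.Basis.repr_equivFun_symm {ι R M : Type*} [Finite ι] [Semiring R]
    [AddCommMonoid M] [Module R M] (b : Module.Basis ι R M) (c : ι → R) (i : ι) :
    b.repr (b.equivFun.symm c) i = c i := by
  rw [← b.equivFun_apply, LinearEquiv.apply_symm_apply]

section PermutationLattice

variable {G ι A : Type*} [Group G] [MulAction G ι] [AddCommGroup A] [DistribMulAction G A]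
  {b : Module.Basis ι ℤ A}

theorem repr_smul_of_smul_basis (hb : ∀ (g : G) i, g • b i = b (g • i)) (g : G) (v : A)
    (i : ι) : b.repr (g • v) i = b.repr v (g⁻¹ • i) := by
  classical
  have : (b.coord i).comp (DistribSMul.toAddMonoidHom A g).toIntLinearMap =
      b.coord (g⁻¹ • i) :=
    b.ext fun j => by simp [hb, Finsupp.single_apply, eq_inv_smul_iff]
  exact LinearMap.congr_fun this v

theorem exists_zsmul_eq_of_forall_intCast_eq_zero [Finite ι] (b : Module.Basis ι ℤ A) (n : ℕ)
    {v : A} (hv : ∀ i, (b.repr v i : ZMod n) = 0) : ∃ a, v = (n : ℤ) • a :=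
  ⟨b.equivFun.symm fun i => b.repr v i / n, b.ext_elem fun i => by
    rw [map_zsmul, Finsupp.smul_apply, Module.Basis.repr_equivFun_symm, smul_eq_mul,
      Int.mul_ediv_cancel' ((ZMod.intCast_zmod_eq_zero_iff_dvd _ _).mp (hv i))]⟩

/-- The element `t` has coordinates `⌊s_i / m⌋`; dividing by `m` is compatible with
`s ↦ g • s - s` because `m • y = g • s - s` forces `s_{g⁻¹ i} ≡ s_i [ZMOD m]`. -/
theorem exists_forall_eq_smul_sub_of_zsmul_eq [Finite ι]
    (hb : ∀ (g : G) i, g • b i = b (g • i)) (s : A) {m : ℤ} (hm : m ≠ 0) :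
    ∃ t : A, ∀ (g : G) (y : A), m • y = g • s - s → y = g • t - t := by
  refine ⟨b.equivFun.symm fun i => b.repr s i / m, fun g y hy => b.ext_elem fun i => ?_⟩
  have hi := congrArg (fun v => b.repr v i) hy
  simp only [map_zsmul, map_sub, Finsupp.smul_apply, Finsupp.sub_apply, smul_eq_mul,
    repr_smul_of_smul_basis hb] at hi
  rw [map_sub, Finsupp.sub_apply, repr_smul_of_smul_basis hb, Module.Basis.repr_equivFun_symm,
    Module.Basis.repr_equivFun_symm, sub_eq_iff_eq_add'.mp hi.symm, Int.add_mul_ediv_left _ _ hm]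
  ring

theorem isCoboundary₁_of_isCocycle₁ [Finite G] [Finite ι] (hb : ∀ (g : G) i, g • b i = b (g • i))
    {f : G → A} (hf : IsCocycle₁ f) : IsCoboundary₁ f := by
  have := Fintype.ofFinite G
  obtain ⟨t, ht⟩ := exists_forall_eq_smul_sub_of_zsmul_eq hb (-∑ h, f h)
    (Int.natCast_ne_zero.mpr (Fintype.card_ne_zero (α := G)))
  refine ⟨t, fun g => (ht g (f g) ?_).symm⟩
  have hsum : ∑ h, f (g * h) = ∑ h, f h := Equiv.sum_comp (Equiv.mulLeft g) f
  simp only [hf g, Finset.sum_add_distrib, ← Finset.smul_sum, Finset.sum_const,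
    Finset.card_univ] at hsum
  rw [natCast_zsmul, smul_neg, neg_sub_neg, eq_sub_iff_add_eq]
  exact (add_comm _ _).trans hsum

/-- Elementwise trivial classes in `H¹(G, P/nP)` vanish for a permutation lattice `P`: apply
`exists_forall_eq_comp_sub_of_forall_exists` to the coordinates modulo `n`. -/
theorem exists_forall_eq_smul_sub_add_zsmul [Finite ι] (hb : ∀ (g : G) i, g • b i = b (g • i))
    (n : ℕ) (x : G → A) (hx : ∀ g h, ∃ a, x (g * h) = g • x h + x g + (n : ℤ) • a)
    (hloc : ∀ g, ∃ w a, x g = g • w - w + (n : ℤ) • a) :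
    ∃ w, ∀ g, ∃ a, x g = g • w - w + (n : ℤ) • a := by
  obtain ⟨w, hw⟩ := exists_forall_eq_comp_sub_of_forall_exists
    (fun g i => (b.repr (x g) i : ZMod n))
    (fun g h i => by
      obtain ⟨a, ha⟩ := hx g h
      simp [ha, repr_smul_of_smul_basis hb, add_comm])
    (fun g => by
      obtain ⟨w, a, ha⟩ := hloc g
      exact ⟨fun i => b.repr w i, fun i => by simp [ha, repr_smul_of_smul_basis hb]⟩)
  refine ⟨b.equivFun.symm fun i => (w i).cast, fun g => ?_⟩
  obtain ⟨a, ha⟩ := exists_zsmul_eq_of_forall_intCast_eq_zero b n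
    (v := x g - (g • b.equivFun.symm (fun i => (w i).cast) - b.equivFun.symm fun i => (w i).cast))
    fun i => by simp [repr_smul_of_smul_basis hb, Module.Basis.repr_equivFun_symm, hw g i]
  exact ⟨a, by rw [← ha]; abel⟩

/-- Summing the cocycle identity over its last variable shows that `x g = ∑ₕ c (g, h)`
satisfies `|G| • c = d x`; so `x` is a cocycle modulo `|G|`, and `c = d z` once
`x ≡ d W + |G| • z`. -/
theorem isCoboundary₂_of_isCoboundary₂OnCyclic [Finite G] [Finite ι]
    (hb : ∀ (g : G) i, g • b i = b (g • i)) {c : G × G → A} (hc : IsCocycle₂ c)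
    (hcyc : IsCoboundary₂OnCyclic c) : IsCoboundary₂ c := by
  have := Fintype.ofFinite G
  have := Module.Free.of_basis b
  set n := Fintype.card G
  set x : G → A := fun g => ∑ h, c (g, h)
  have hdx : ∀ g h, (n : ℤ) • c (g, h) = g • x h + x g - x (g * h) := fun g h => by
    have hsum := Finset.sum_congr rfl fun k (_ : k ∈ Finset.univ) => hc g h k
    have hshift : ∑ k, c (g, h * k) = x g := Equiv.sum_comp (Equiv.mulLeft h) fun k => c (g, k)
    rw [Finset.sum_add_distrib, Finset.sum_add_distrib, ← Finset.smul_sum, hshift] at hsum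
    simp only [Finset.sum_const, Finset.card_univ] at hsum
    rw [natCast_zsmul, eq_sub_iff_add_eq, ← hsum]
    abel
  have hloc : ∀ g, ∃ w a, x g = g • w - w + (n : ℤ) • a := fun g => by
    obtain ⟨u, hu⟩ := hcyc g
    dsimp only at hu
    obtain ⟨w, hw⟩ := isCoboundary₁_of_isCocycle₁ (G := Subgroup.zpowers g)
      (fun h i => hb h i) (f := fun h => x h - (n : ℤ) • u h) fun h k => by
        have hdx' := hdx h k
        rw [← hu h k, Subgroup.smul_def] at hdx'
        have hx : x ↑(h * k) =
            (h : G) • x k + x h - (n : ℤ) • ((h : G) • u k - u (h * k) + u h) := by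
          rw [hdx', Subgroup.coe_mul]
          abel
        simp only [hx, Subgroup.smul_def, smul_sub, smul_add, smul_comm (h : G) (n : ℤ)]
        abel
    have hwg := hw ⟨g, Subgroup.mem_zpowers g⟩
    dsimp only at hwg
    exact ⟨w, u ⟨g, Subgroup.mem_zpowers g⟩, by rw [← sub_eq_iff_eq_add, ← hwg]; rfl⟩
  obtain ⟨W, hW⟩ := exists_forall_eq_smul_sub_add_zsmul hb n x
    (fun g h => ⟨-c (g, h), by rw [smul_neg, hdx]; abel⟩) hloc
  choose z hz using hW
  have hn : (n : ℤ) ≠ 0 := Int.natCast_ne_zero.mpr Fintype.card_ne_zero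
  refine ⟨z, fun g h => smul_right_injective A hn ?_⟩
  change (n : ℤ) • (g • z h - z (g * h) + z g) = (n : ℤ) • c (g, h)
  rw [hdx, hz g, hz h, hz (g * h)]
  simp only [smul_add, smul_sub, smul_comm g (n : ℤ), mul_smul]
  abel

end PermutationLattice

section Chase

variable {G ι ι' P P' L : Type*} [Group G] [Finite G] [MulAction G ι] [MulAction G ι']
  [Finite ι] [Finite ι'] [AddCommGroup P] [AddCommGroup P'] [AddCommGroup L]
  [DistribMulAction G P] [DistribMulAction G P'] [DistribMulAction G L]
  {b : Module.Basis ι ℤ P} {b' : Module.Basis ι' ℤ P'}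

/-- The connecting map `Ш¹_ω(G, L) → Ш²_ω(G, P')` of `0 → P' → P → L → 0` is injective because
`H¹(G, P) = 0`, and its target vanishes. -/
theorem isCoboundary₁_of_isCoboundary₁OnCyclic_of_exact (hb : ∀ (g : G) i, g • b i = b (g • i))
    (hb' : ∀ (g : G) i, g • b' i = b' (g • i)) (f : P' →+[G] P) (q : P →+[G] L)
    (hf : Injective f) (hq : Surjective q) (hfq : Exact f q) {ξ : G → L} (hξ : IsCocycle₁ ξ)
    (hcyc : IsCoboundary₁OnCyclic ξ) : IsCoboundary₁ ξ := by
  choose η hη using fun g => hq (ξ g)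
  have hdη : ∀ g h, q (g • η h - η (g * h) + η g) = 0 := fun g h => by
    simp only [map_add, map_sub, map_smul, hη, hξ g h, sub_add_cancel_left, neg_add_cancel]
  choose c hc using fun g h => (hfq _).mp (hdη g h)
  have hcoc : IsCocycle₂ fun gh : G × G => c gh.1 gh.2 := fun g h k => hf <| by
    simp only [map_add, map_smul, hc, smul_add, smul_sub, mul_smul, mul_assoc]
    abel
  have hcyc₂ : IsCoboundary₂OnCyclic fun gh : G × G => c gh.1 gh.2 := fun g => by
    obtain ⟨u, hu⟩ := hcyc g
    obtain ⟨ũ, rfl⟩ := hq u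
    have hker : ∀ h : Subgroup.zpowers g, q (η h - ((h : G) • ũ - ũ)) = 0 := fun h => by
      rw [map_sub, hη, map_sub, map_smul, ← Subgroup.smul_def, hu, sub_self]
    choose v hv using fun h => (hfq _).mp (hker h)
    refine ⟨v, fun h k => hf ?_⟩
    simp only [map_add, map_sub, map_smul, Subgroup.smul_def, hv, hc, Subgroup.coe_mul,
      smul_sub, mul_smul]
    abel
  obtain ⟨V, hV⟩ := isCoboundary₂_of_isCoboundary₂OnCyclic hb' hcoc hcyc₂
  obtain ⟨w, hw⟩ := isCoboundary₁_of_isCocycle₁ hb (f := fun g => η g - f (V g)) fun g h => by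
    have := congrArg f (hV g h)
    simp only [map_add, map_sub, map_smul, hc] at this
    have hηgh : η (g * h) = g • η h + η g - (g • f (V h) - f (V (g * h)) + f (V g)) := by
      rw [this]
      abel
    simp only [hηgh, smul_sub]
    abel
  refine ⟨q w, fun g => ?_⟩
  rw [← map_smul, ← map_sub, hw, map_sub, hη, hfq.apply_apply_eq_zero, sub_zero]

end Chase

abbrev dualDistribMulAction {G L : Type*} [Group G] [AddCommGroup L] [DistribMulAction G L] :
    DistribMulAction G (Module.Dual ℤ L) where
  smul g φ := φ ∘ₗ (DistribSMul.toAddMonoidHom L g⁻¹).toIntLinearMap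
  one_smul φ := LinearMap.ext fun x => congrArg φ (by simp)
  mul_smul g h φ := LinearMap.ext fun x => congrArg φ (by simp [mul_smul])
  smul_zero _ := rfl
  smul_add _ _ _ := rfl

attribute [local instance] dualDistribMulAction

section Dual

variable {G L M : Type*} [Group G] [AddCommGroup L] [AddCommGroup M] [DistribMulAction G L]
  [DistribMulAction G M]

theorem dual_smul_apply (g : G) (φ : Module.Dual ℤ L) (x : L) : (g • φ) x = φ (g⁻¹ • x) := rfl

theorem dualBasis_smul {ι : Type*} [MulAction G ι] [Finite ι] [DecidableEq ι]
    {b : Module.Basis ι ℤ L} (hb : ∀ (g : G) i, g • b i = b (g • i)) (g : G) (i : ι) :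
    g • b.dualBasis i = b.dualBasis (g • i) :=
  b.ext fun j => by simp [dual_smul_apply, hb, Finsupp.single_apply, inv_smul_eq_iff]

def dualHom (f : L →+ M) (hf : ∀ (g : G) x, f (g • x) = g • f x) :
    Module.Dual ℤ M →+[G] Module.Dual ℤ L where
  toFun φ := φ ∘ₗ f.toIntLinearMap
  map_smul' g φ := LinearMap.ext fun x => by simp [dual_smul_apply, hf]
  map_zero' := rfl
  map_add' _ _ := rfl

end Dual

section DualExact

variable {L P P' : Type*} [AddCommGroup L] [AddCommGroup P] [AddCommGroup P']
  [Module.Projective ℤ P'] {f : L →+ P} {g : P →+ P'}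

theorem surjective_dualMap_of_exact (hf : Injective f) (hg : Surjective g) (hfg : Exact f g) :
    Surjective f.toIntLinearMap.dualMap := by
  obtain ⟨s, hs⟩ := g.toIntLinearMap.exists_rightInverse_of_surjective
    (LinearMap.range_eq_top.mpr hg)
  have hsplit := Exact.split_tfae (f := f.toIntLinearMap) (g := g.toIntLinearMap) hfg hf hg
  obtain ⟨r, hr⟩ := (hsplit.out 0 1).mp (⟨s, hs⟩ : ∃ l, g.toIntLinearMap ∘ₗ l = .id)
  intro φ
  refine ⟨φ ∘ₗ r, ?_⟩
  rw [LinearMap.dualMap_apply', LinearMap.comp_assoc, hr]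
  rfl

end DualExact

section ShaOne

variable (G A : Type*) [Group G] [AddCommGroup A] [DistribMulAction G A]

/-- Sansuc's `Ш¹_ω(G, A)` vanishes. -/
def ShaOneTrivial : Prop :=
  ∀ ξ : G → A, IsCocycle₁ ξ → IsCoboundary₁OnCyclic ξ → IsCoboundary₁ ξ

variable {G A} {B : Type*} [AddCommGroup B] [DistribMulAction G B]

theorem ShaOneTrivial.of_retract (s : A →+[G] B) (r : B →+[G] A) (hrs : ∀ a, r (s a) = a)
    (hB : ShaOneTrivial G B) : ShaOneTrivial G A := fun ξ hξ hcyc => by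
  have hsξ : IsCocycle₁ (s ∘ ξ) := fun g h => by simp [hξ g h]
  have hcyc' : IsCoboundary₁OnCyclic (s ∘ ξ) := fun g => by
    obtain ⟨u, hu⟩ := hcyc g
    exact ⟨s u, fun h => by simp [← hu h, Subgroup.smul_def]⟩
  obtain ⟨w, hw⟩ := hB _ hsξ hcyc'
  exact ⟨r w, fun g => by simp [← map_smul, ← map_sub, hw g, hrs]⟩

end ShaOne

namespace GLat

variable {Γ : Type u} [Group Γ]

theorem IsPermutation.exists_smul_basis {P : GLat Γ} (hP : P.IsPermutation) :
    ∃ (ι : Type u) (_ : MulAction Γ ι) (b : Module.Basis ι ℤ P),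
      ∀ (g : Γ) i, g • b i = b (g • i) := by
  obtain ⟨ι, b, hb⟩ := hP
  choose σ hσ using hb
  let σhom : Γ →* Equiv.Perm ι :=
    { toFun := σ
      map_one' := Equiv.ext fun i => b.injective (by rw [← hσ, one_smul]; rfl)
      map_mul' := fun g h => Equiv.ext fun i => b.injective (by
        rw [← hσ, mul_smul, hσ, hσ]; rfl) }
  exact ⟨ι, MulAction.compHom ι σhom, b, hσ⟩

theorem IsQuasiPermutation.shaOneTrivial_dual [Finite Γ] {L : GLat Γ}
    (hL : L.IsQuasiPermutation) : ShaOneTrivial Γ (Module.Dual ℤ L) := by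
  classical
  obtain ⟨P, P', f, g, hP, hP', hf, hg, hfinj, hgsurj, hker⟩ := hL
  obtain ⟨ι, _, b, hb⟩ := hP.exists_smul_basis
  obtain ⟨ι', _, b', hb'⟩ := hP'.exists_smul_basis
  have := Module.Finite.finite_basis b
  have := Module.Finite.finite_basis b'
  have hfg : Exact f g := AddMonoidHom.exact_iff.mpr hker
  exact fun ξ => isCoboundary₁_of_isCoboundary₁OnCyclic_of_exact (dualBasis_smul hb)
    (dualBasis_smul hb') (dualHom g hg) (dualHom f hf)
    (LinearMap.dualMap_injective_of_surjective (f := g.toIntLinearMap) hgsurj)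
    (surjective_dualMap_of_exact hfinj hgsurj hfg)
    (LinearMap.exact_lcomp_of_exact_of_surjective ℤ (f := f.toIntLinearMap) hfg hgsurj)

theorem IsQuasiInvertible.shaOneTrivial_dual [Finite Γ] {L : GLat Γ}
    (hL : L.IsQuasiInvertible) : ShaOneTrivial Γ (Module.Dual ℤ L) := by
  obtain ⟨M, hLM⟩ := hL
  exact hLM.shaOneTrivial_dual.of_retract
    (dualHom (AddMonoidHom.fst L M) fun _ _ => rfl)
    (dualHom (AddMonoidHom.inl L M) fun g _ => Prod.ext rfl (smul_zero g).symm)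
    fun _ => rfl

end GLat

section AugmentationDual

open MonoidAlgebra

theorem MonoidAlgebra.coeff_sum_single_one {G : Type*} [Monoid G] [Fintype G] (g : G) :
    (∑ h : G, single h (1 : ℤ)).coeff g = 1 := by
  classical
  simp [coeff_sum, coeff_single, Finsupp.single_apply]

theorem exists_dual_comp_eq {G J : Type*} [Monoid G] [Fintype G] [AddCommGroup J]
    {π : MonoidAlgebra ℤ G →+ J} (hsurj : Surjective π)
    (hker : π.ker = AddSubgroup.zmultiples (∑ g : G, single g (1 : ℤ)))
    (F : MonoidAlgebra ℤ G →+ ℤ) (hF : F (∑ g : G, single g (1 : ℤ)) = 0) :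
    ∃ φ : Module.Dual ℤ J, ∀ x, φ (π x) = F x := by
  have hle : π.ker ≤ F.ker := by
    rw [hker, AddSubgroup.zmultiples_le]
    exact hF
  have hπ := rightInverse_surjInv hsurj
  exact ⟨(π.liftOfRightInverse _ hπ ⟨F, hle⟩).toIntLinearMap,
    π.liftOfRightInverse_comp_apply _ hπ ⟨F, hle⟩⟩

variable {G J : Type*} [Group G] [AddCommGroup J] [DistribMulAction G J]
  {π : MonoidAlgebra ℤ G →+ J}

theorem dual_smul_apply_of_equivariant
    (hequi : ∀ (g : G) (x : MonoidAlgebra ℤ G), π (single g (1 : ℤ) * x) = g • π x) (g : G)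
    (φ : Module.Dual ℤ J) (x : MonoidAlgebra ℤ G) :
    (g • φ) (π x) = φ (π (single g⁻¹ (1 : ℤ) * x)) := by
  rw [dual_smul_apply, hequi]

theorem isCocycle₁_of_apply_eq (hsurj : Surjective π)
    (hequi : ∀ (g : G) (x : MonoidAlgebra ℤ G), π (single g (1 : ℤ) * x) = g • π x)
    {e : ℤ} {ξ : G → Module.Dual ℤ J} (hξ : ∀ g x, ξ g (π x) = e * (x.coeff g - x.coeff 1)) :
    IsCocycle₁ ξ := fun g h => LinearMap.ext fun y => by
  obtain ⟨x, rfl⟩ := hsurj y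
  simp only [LinearMap.add_apply, dual_smul_apply_of_equivariant hequi, hξ,
    coeff_single_mul_apply, inv_inv, one_mul, mul_one]
  ring

theorem isCoboundary₁OnCyclic_of_apply_eq [Fintype G] (hsurj : Surjective π)
    (hker : π.ker = AddSubgroup.zmultiples (∑ g : G, single g (1 : ℤ)))
    (hequi : ∀ (g : G) (x : MonoidAlgebra ℤ G), π (single g (1 : ℤ) * x) = g • π x)
    {ξ : G → Module.Dual ℤ J}
    (hξ : ∀ g x, ξ g (π x) = Monoid.exponent G * (x.coeff g - x.coeff 1)) :
    IsCoboundary₁OnCyclic ξ := fun g => by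
  classical
  set C := Subgroup.zpowers g
  set m := Monoid.exponent G / Fintype.card C
  have hm : m * Fintype.card C = Monoid.exponent G := by
    refine Nat.div_mul_cancel ?_
    rw [← Nat.card_eq_fintype_card, Nat.card_zpowers]
    exact Monoid.order_dvd_exponent g
  let F : MonoidAlgebra ℤ G →+ ℤ := AddMonoidHom.mk'
    (fun x => Monoid.exponent G * x.coeff 1 - m * ∑ k : C, x.coeff k)
    fun x y => by simp only [coeff_add, Finsupp.add_apply, Finset.sum_add_distrib]; ring
  obtain ⟨u, hu⟩ := exists_dual_comp_eq hsurj hker F (by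
    simp only [F, AddMonoidHom.mk'_apply, coeff_sum_single_one, Finset.sum_const,
      Finset.card_univ, ← hm]
    push_cast
    ring)
  refine ⟨u, fun h => LinearMap.ext fun y => ?_⟩
  obtain ⟨x, rfl⟩ := hsurj y
  have hshift : ∑ k : C, x.coeff ((h : G) * k) = ∑ k : C, x.coeff k :=
    Equiv.sum_comp (Equiv.mulLeft h) fun k : C => x.coeff k
  simp only [LinearMap.sub_apply, Subgroup.smul_def, dual_smul_apply_of_equivariant hequi, hu,
    hξ, F, AddMonoidHom.mk'_apply, coeff_single_mul_apply, inv_inv, one_mul, mul_one, hshift]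
  ring

/-- Evaluating `ξ g⁻¹ = g⁻¹ • w - w` at `π (single 1 1)` gives
`w (π (single g 1)) = w (π (single 1 1)) - e` for `g ≠ 1`; since `w` kills the image of the norm
element, summing over `G` gives `|G| ∣ e`. -/
theorem not_isCoboundary₁_of_apply_eq [Fintype G]
    (hker : π.ker = AddSubgroup.zmultiples (∑ g : G, single g (1 : ℤ)))
    (hequi : ∀ (g : G) (x : MonoidAlgebra ℤ G), π (single g (1 : ℤ) * x) = g • π x)
    {e : ℤ} (he : ¬ (Fintype.card G : ℤ) ∣ e) {ξ : G → Module.Dual ℤ J}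
    (hξ : ∀ g x, ξ g (π x) = e * (x.coeff g - x.coeff 1)) : ¬ IsCoboundary₁ ξ := by
  classical
  rintro ⟨w, hw⟩
  let t (g : G) : ℤ := w (π (single g 1))
  have ht : ∀ g, t g - t 1 + e = if g = 1 then e else 0 := fun g => by
    have := LinearMap.congr_fun (hw g⁻¹) (π (single 1 1))
    rw [LinearMap.sub_apply, dual_smul_apply_of_equivariant hequi, inv_inv, single_mul_single,
      mul_one, one_mul, hξ] at this
    split_ifs with hg
    · simp [hg]
    · simp [t, this, coeff_single, hg]
  have hsum : ∑ g, t g = 0 := by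
    have hN : π (∑ g : G, single g (1 : ℤ)) = 0 := by
      rw [← AddMonoidHom.mem_ker, hker]
      exact AddSubgroup.mem_zmultiples _
    simp only [t, ← map_sum, hN, map_zero]
  have key := Finset.sum_congr rfl fun g (_ : g ∈ Finset.univ) => ht g
  rw [Finset.sum_ite_eq' Finset.univ (1 : G), if_pos (Finset.mem_univ _), Finset.sum_add_distrib,
    Finset.sum_sub_distrib, hsum, Finset.sum_const, Finset.sum_const, Finset.card_univ,
    nsmul_eq_mul, nsmul_eq_mul] at key
  exact he ⟨e - t 1, by linear_combination -key⟩

theorem not_shaOneTrivial_dual_of_exponent_lt_card [Fintype G] (hsurj : Surjective π)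
    (hker : π.ker = AddSubgroup.zmultiples (∑ g : G, single g (1 : ℤ)))
    (hequi : ∀ (g : G) (x : MonoidAlgebra ℤ G), π (single g (1 : ℤ) * x) = g • π x)
    (hexp : Monoid.exponent G < Nat.card G) : ¬ ShaOneTrivial G (Module.Dual ℤ J) := by
  have hlift : ∀ g : G, ∃ φ : Module.Dual ℤ J,
      ∀ x, φ (π x) = Monoid.exponent G * (x.coeff g - x.coeff 1) := fun g =>
    exists_dual_comp_eq hsurj hker (AddMonoidHom.mk'
      (fun x => Monoid.exponent G * (x.coeff g - x.coeff 1))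
      fun x y => by simp only [coeff_add, Finsupp.add_apply]; ring)
      (by simp only [AddMonoidHom.mk'_apply, coeff_sum_single_one, sub_self, mul_zero])
  choose ξ hξ using hlift
  have hdvd : ¬ (Fintype.card G : ℤ) ∣ Monoid.exponent G := fun h => by
    rw [Nat.card_eq_fintype_card] at hexp
    exact hexp.not_ge (Nat.le_of_dvd (Nat.pos_of_ne_zero Monoid.exponent_ne_zero_of_finite)
      (Int.natCast_dvd_natCast.mp h))
  exact fun htriv => not_isCoboundary₁_of_apply_eq hker hequi hdvd hξ
    (htriv ξ (isCocycle₁_of_apply_eq hsurj hequi hξ)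
      (isCoboundary₁OnCyclic_of_apply_eq hsurj hker hequi hξ))

end AugmentationDual

theorem exponent_lt_card_zmod_prod (p : ℕ) [Fact p.Prime] :
    Monoid.exponent (Multiplicative (ZMod p × ZMod p)) <
      Nat.card (Multiplicative (ZMod p × ZMod p)) := by
  simp only [Monoid.exponent_multiplicative, AddMonoid.exponent_prod, ZMod.exponent, lcm_same,
    Nat.card_eq_fintype_card, Fintype.card_multiplicative, Fintype.card_prod, ZMod.card,
    normalize_eq]
  exact lt_mul_self (Fact.out : p.Prime).one_lt

/-- Voskresenskiĭ's theorem: for `Γ = ℤ/pℤ × ℤ/pℤ` (`p` prime), the `Γ`-lattice `J_Γ`,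
defined by the exact sequence `0 → ℤ → ℤ[Γ] → J_Γ → 0` with the first map the norm map,
is not quasi-invertible; in particular it is not quasi-permutation (and is not a direct
summand of any quasi-permutation `Γ`-lattice, which is what quasi-invertibility means). -/
theorem JGamma_not_quasiInvertible (p : ℕ) [Fact p.Prime]
    (J : GLat (Multiplicative (ZMod p × ZMod p)))
    (π : MonoidAlgebra ℤ (Multiplicative (ZMod p × ZMod p)) →+ J.carrier)
    (hsurj : Function.Surjective π)
    (hker : π.ker = AddSubgroup.zmultiples
      (∑ γ : Multiplicative (ZMod p × ZMod p), MonoidAlgebra.single γ (1 : ℤ)))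
    (hequi : ∀ (γ : Multiplicative (ZMod p × ZMod p))
        (x : MonoidAlgebra ℤ (Multiplicative (ZMod p × ZMod p))),
        π (MonoidAlgebra.single γ (1 : ℤ) * x) = γ • π x) :
    ¬ J.IsQuasiInvertible ∧ ¬ J.IsQuasiPermutation := by
  have hJ := not_shaOneTrivial_dual_of_exponent_lt_card hsurj hker hequi
    (exponent_lt_card_zmod_prod p)
  exact ⟨fun h => hJ h.shaOneTrivial_dual, fun h => hJ h.shaOneTrivial_dual⟩
end

section
/- Let W₁,…,W_m be finite groups, V_i a finite-dimensional ℚ-representation of W_i, V = V₁ ⊕ ⋯ ⊕ V_m with the action of W = W₁ × ⋯ × W_m, and L ⊂ V a W-invariant lattice (finitely generated free subgroup). If L is a quasi-permutation W-lattice, then for each i the intersection L_i = L ∩ V_i is a quasi-permutation W_i-lattice. -/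
universe u

/-!
Embed `W i₀` in `W` as the `i₀`-th factor. Then `L_{i₀}` is a saturated sublattice of `L` and
`W i₀` acts trivially on `L / L_{i₀}`, since it acts trivially on the other components of `V`.
If `0 → L → P → P' → 0` with `P`, `P'` permutation, then `0 → L_{i₀} → P → P / L_{i₀} → 0`,
and `P / L_{i₀}` is an extension of `P'` by the trivial lattice `L / L_{i₀}`. Such an extension
splits equivariantly: a lift `x` of a basis vector of `P'` is fixed by the stabiliser of that
vector, because for `g` in the stabiliser `g • x - x` lies in the torsion-free trivial kernel
and `g` has finite order. Hence `P / L_{i₀} ≅ L / L_{i₀} ⊕ P'` is a permutation lattice.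
-/

theorem IsOfFinOrder.smul_eq_self_of_smul_sub_fixed {G M : Type*} [Monoid G] [AddCommGroup M]
    [DistribMulAction G M] [IsAddTorsionFree M] {g : G} (hg : IsOfFinOrder g) {x : M}
    (hfix : g • (g • x - x) = g • x - x) : g • x = x := by
  set d := g • x - x
  have hpow (n : ℕ) : g ^ n • x = x + n • d := by
    induction n with
    | zero => simp
    | succ n ih =>
      rw [pow_succ', mul_smul, ih, smul_add, smul_comm g n d, hfix, succ_nsmul]
      simp only [d]
      abel
  have hd : orderOf g • d = 0 := by
    simpa [pow_orderOf_eq_one] using hpow (orderOf g)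
  rw [← sub_eq_zero]
  exact nsmul_right_injective (orderOf_pos_iff.mpr hg).ne' (hd.trans (nsmul_zero _).symm)

theorem MulActionHom.exists_lift {G ι X Y : Type*} [Group G] [MulAction G ι] [MulAction G X]
    [MulAction G Y] (ψ : X →[G] Y) (hψ : Function.Surjective ψ)
    (hstab : ∀ (g : G) (x : X), g • ψ x = ψ x → g • x = x) (y : ι →[G] Y) :
    ∃ x : ι →[G] X, ∀ i, ψ (x i) = y i := by
  let r : ι → ι := fun i => (Quotient.mk (MulAction.orbitRel G ι) i).out
  have hr (i : ι) : ∃ g : G, g • r i = i :=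
    MulAction.mem_orbit_iff.mp
      (Quotient.exact (Quotient.out_eq (Quotient.mk (MulAction.orbitRel G ι) i)).symm)
  have hr_smul (g : G) (i : ι) : r (g • i) = r i :=
    congrArg Quotient.out (Quotient.sound ⟨g, rfl⟩)
  choose t ht using hr
  choose x₀ hx₀ using fun i => hψ (y i)
  refine ⟨⟨fun i => t i • x₀ (r i), fun g i => ?_⟩, fun i => ?_⟩
  · have hr_fix : ((t (g • i))⁻¹ * g * t i) • r i = r i := by
      rw [mul_smul, mul_smul, ht i, inv_smul_eq_iff, ← hr_smul g i, ht]
    have hx₀_fix := hstab _ _ (by rw [hx₀, ← map_smul, hr_fix])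
    rw [mul_smul, mul_smul, inv_smul_eq_iff] at hx₀_fix
    simp only [id, hr_smul g i]
    exact hx₀_fix.symm
  · change ψ (t i • x₀ (r i)) = y i
    rw [map_smul, hx₀, ← map_smul, ht]

theorem AddSubgroup.nsmulSaturated_map {B P : Type*} [AddGroup B] [AddGroup P] {H : AddSubgroup B}
    (hH : H.NSMulSaturated) {f : B →+ P} (hf : Function.Injective f)
    (hfr : f.range.NSMulSaturated) : (H.map f).NSMulSaturated := by
  rintro n p ⟨b, hb, hbp⟩
  obtain rfl | ⟨c, rfl⟩ := hfr ⟨b, hbp⟩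
  · exact .inl rfl
  rw [← map_nsmul] at hbp
  obtain rfl | hc := hH (show n • c ∈ H from hf hbp ▸ hb)
  · exact .inl rfl
  · exact .inr ⟨c, hc, rfl⟩

theorem AddSubgroup.isAddTorsionFree_quotient {G : Type*} [AddCommGroup G]
    {N : AddSubgroup G} (hN : N.NSMulSaturated) : IsAddTorsionFree (G ⧸ N) := by
  refine ⟨fun n hn a b hab => ?_⟩
  obtain ⟨a, rfl⟩ := QuotientAddGroup.mk_surjective a
  obtain ⟨b, rfl⟩ := QuotientAddGroup.mk_surjective b
  simp only [← QuotientAddGroup.mk_nsmul, QuotientAddGroup.eq_iff_sub_mem, ← nsmul_sub] at hab ⊢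
  exact (hN hab).resolve_left hn

namespace GLat

variable {Γ : Type u} [Group Γ]

instance (L : GLat Γ) : IsAddTorsionFree L := .of_isTorsionFree ℤ L

theorem IsPermutation.exists_basis {P : GLat Γ} (hP : P.IsPermutation) :
    ∃ (S : SubMulAction Γ P) (b : Module.Basis S ℤ P), ∀ s, b s = s := by
  obtain ⟨ι, b, hb⟩ := hP
  refine ⟨⟨Set.range b, ?_⟩, b.reindexRange, b.reindexRange_apply⟩
  rintro γ _ ⟨i, rfl⟩
  obtain ⟨σ, hσ⟩ := hb γ
  exact ⟨σ i, (hσ i).symm⟩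

theorem IsPermutation.of_surjective [Finite Γ] {X P : GLat Γ} (hP : P.IsPermutation)
    (ψ : X →+ P) (hψ : Equivariant ψ) (hsurj : Function.Surjective ψ)
    (hfix : ∀ (γ : Γ), ∀ x ∈ ψ.ker, γ • x = x) : X.IsPermutation := by
  obtain ⟨S, b, hb⟩ := hP.exists_basis
  have hstab (γ : Γ) (x : X) (h : γ • ψ x = ψ x) : γ • x = x :=
    (isOfFinOrder_of_finite γ).smul_eq_self_of_smul_sub_fixed
      (hfix γ _ (by rw [ψ.mem_ker, map_sub, hψ, h, sub_self]))
  obtain ⟨x, hx⟩ := (⟨ψ, hψ⟩ : X →[Γ] P).exists_lift hsurj hstab S.subtype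
  let s : P →ₗ[ℤ] X := b.constr ℤ x
  have hs : ψ.toIntLinearMap ∘ₗ s = .id := b.ext fun t => by
    rw [LinearMap.comp_apply, b.constr_basis, LinearMap.id_apply, hb]
    exact hx t
  let K := LinearMap.ker ψ.toIntLinearMap
  let e := ((LinearMap.exact_subtype_ker_map ψ.toIntLinearMap).splitSurjectiveEquiv
    K.subtype_injective ⟨s, hs⟩).1
  have he (k : K) (p : P) : e.symm (k, p) = k + s p := rfl
  let c := Module.Free.chooseBasis ℤ K
  refine ⟨_ ⊕ S, (c.prod b).map e.symm,
    fun γ => ⟨Equiv.sumCongr (.refl _) (MulAction.toPerm γ), ?_⟩⟩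
  rintro (i | t)
  · simp only [Module.Basis.map_apply, Module.Basis.prod_apply, Equiv.sumCongr_apply, Sum.map_inl,
      Sum.elim_inl, Function.comp_apply, LinearMap.inl_apply, he, map_zero, add_zero,
      Equiv.refl_apply]
    exact hfix γ _ (c i).2
  · simp only [Module.Basis.map_apply, Module.Basis.prod_apply, Equiv.sumCongr_apply, Sum.map_inr,
      Sum.elim_inr, Function.comp_apply, LinearMap.inr_apply, he, ZeroMemClass.coe_zero, zero_add,
      MulAction.toPerm_apply, b.constr_basis, s]
    exact (x.map_smul γ t).symm

section Quotient

variable (M : GLat Γ) (N : AddSubgroup M)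

def quotient (hN : ∀ γ : Γ, ∀ x ∈ N, γ • x ∈ N) (hsat : N.NSMulSaturated) : GLat Γ :=
  letI : SMul Γ (M ⧸ N) :=
    ⟨fun γ => QuotientAddGroup.map N N (DistribSMul.toAddMonoidHom M γ) (hN γ)⟩
  letI : IsAddTorsionFree (M ⧸ N) := AddSubgroup.isAddTorsionFree_quotient hsat
  letI : Module.Finite ℤ (M ⧸ N) :=
    .of_surjective (QuotientAddGroup.mk' N).toIntLinearMap (QuotientAddGroup.mk'_surjective N)
  { carrier := M ⧸ N
    act := (QuotientAddGroup.mk'_surjective N).distribMulAction (QuotientAddGroup.mk' N)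
      fun _ _ => rfl }

variable (hN : ∀ γ : Γ, ∀ x ∈ N, γ • x ∈ N) (hsat : N.NSMulSaturated)

def mkQ : M →+ M.quotient N hN hsat := QuotientAddGroup.mk' N

theorem equivariant_mkQ : Equivariant (M.mkQ N hN hsat) := fun _ _ => rfl

end Quotient

section Restrict

variable {Γ₀ : Type u} [Group Γ₀] (e : Γ →* Γ₀)

def restrict (M : GLat Γ₀) : GLat Γ where
  carrier := M
  act := DistribMulAction.compHom M e

theorem IsPermutation.restrict {M : GLat Γ₀} (hM : M.IsPermutation) :
    (M.restrict e).IsPermutation := by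
  obtain ⟨ι, b, hb⟩ := hM
  exact ⟨ι, b, fun γ => hb (e γ)⟩

theorem IsQuasiPermutation.restrict {M : GLat Γ₀} (hM : M.IsQuasiPermutation) :
    (M.restrict e).IsQuasiPermutation := by
  obtain ⟨P, P', f, g, hP, hP', hf, hg, hses⟩ := hM
  exact ⟨P.restrict e, P'.restrict e, f, g, hP.restrict e, hP'.restrict e,
    fun γ => hf (e γ), fun γ => hg (e γ), hses⟩

end Restrict

theorem IsQuasiPermutation.of_injective [Finite Γ] {A B : GLat Γ} (hB : B.IsQuasiPermutation)
    (k : A →+ B) (hk : Function.Injective k) (hke : Equivariant k)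
    (hsat : k.range.NSMulSaturated) (hfix : ∀ (γ : Γ) (b : B), γ • b - b ∈ k.range) :
    A.IsQuasiPermutation := by
  obtain ⟨P, P', f, g, hP, hP', hf, hg, hfinj, hgsurj, hker⟩ := hB
  let N := k.range.map f
  have hN : ∀ γ : Γ, ∀ p ∈ N, γ • p ∈ N := by
    rintro γ _ ⟨_, ⟨a, rfl⟩, rfl⟩
    exact ⟨k (γ • a), ⟨γ • a, rfl⟩, by rw [hke, hf]⟩
  have hNsat : N.NSMulSaturated :=
    AddSubgroup.nsmulSaturated_map hsat hfinj (hker ▸ AddSubmonoid.ker_saturated g)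
  have hNg : N ≤ g.ker := hker ▸ AddSubgroup.map_le_range f _
  let ψ : P.quotient N hN hNsat →+ P' := QuotientAddGroup.lift N g hNg
  have hX : (P.quotient N hN hNsat).IsPermutation := by
    refine hP'.of_surjective ψ ?_ ?_ ?_
    · intro γ q
      obtain ⟨p, rfl⟩ := QuotientAddGroup.mk_surjective q
      exact hg γ p
    · intro p'
      obtain ⟨p, rfl⟩ := hgsurj p'
      exact ⟨QuotientAddGroup.mk p, rfl⟩
    · intro γ q hq
      obtain ⟨p, rfl⟩ := QuotientAddGroup.mk_surjective q
      obtain ⟨b, rfl⟩ : p ∈ f.range := hker ▸ hq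
      change QuotientAddGroup.mk (γ • f b) = QuotientAddGroup.mk (f b)
      rw [QuotientAddGroup.eq_iff_sub_mem, ← hf, ← map_sub]
      exact AddSubgroup.mem_map_of_mem f (hfix γ b)
  refine ⟨P, _, f.comp k, P.mkQ N hN hNsat, hP, hX, fun γ a => ?_, P.equivariant_mkQ N hN hNsat,
    hfinj.comp hk, QuotientAddGroup.mk'_surjective N, ?_⟩
  · change f (k (γ • a)) = γ • f (k a)
    rw [hke, hf]
  · exact (QuotientAddGroup.ker_mk' N).trans (AddMonoidHom.range_comp f k).symm

end GLat

theorem exists_addMonoidHom_single_of_mem_range {ι : Type*} [DecidableEq ι] {V : ι → Type*}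
    [∀ i, AddCommGroup (V i)] {L Lᵢ : Type*} [AddCommGroup L] [AddCommGroup Lᵢ]
    {j : L →+ ∀ i, V i} (hj : Function.Injective j) {i₀ : ι} {jᵢ : Lᵢ →+ V i₀}
    (hrange : ∀ y, (∃ z, jᵢ z = y) ↔ Pi.single i₀ y ∈ Set.range j) :
    ∃ k : Lᵢ →+ L, (∀ z, j (k z) = Pi.single i₀ (jᵢ z)) ∧
      ∀ x, x ∈ k.range ↔ ∀ i ≠ i₀, j x i = 0 := by
  let k : Lᵢ →+ L := (AddMonoidHom.ofInjective hj).symm.toAddMonoidHom.comp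
    (((AddMonoidHom.single V i₀).comp jᵢ).codRestrict j.range
      fun z => (hrange (jᵢ z)).mp ⟨z, rfl⟩)
  have hk (z : Lᵢ) : j (k z) = Pi.single i₀ (jᵢ z) := AddMonoidHom.apply_ofInjective_symm hj _
  refine ⟨k, hk, fun x => ⟨?_, fun hx => ?_⟩⟩
  · rintro ⟨z, rfl⟩ i hi
    rw [hk, Pi.single_eq_of_ne hi]
  · have hjx : Pi.single i₀ (j x i₀) = j x := by
      funext i
      rcases eq_or_ne i i₀ with rfl | hi
      · exact Pi.single_eq_same _ _
      · rw [Pi.single_eq_of_ne hi, hx i hi]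
    obtain ⟨z, hz⟩ := (hrange (j x i₀)).mpr ⟨x, hjx.symm⟩
    exact ⟨z, hj (by rw [hk, hz, hjx])⟩

theorem component_quasiPermutation_general {ι : Type u} [DecidableEq ι]
    (W : ι → Type u) [∀ i, Group (W i)] [∀ i, Fintype (W i)]
    (V : ι → Type u) [∀ i, AddCommGroup (V i)] [∀ i, Module ℚ (V i)]
    [∀ i, DistribMulAction (W i) (V i)]
    (LG : GLat (∀ i, W i)) (j : LG.carrier →+ (∀ i, V i))
    (hinj : Function.Injective j)
    (hequi : ∀ (w : ∀ i, W i) (x : LG.carrier), j (w • x) = fun i => w i • j x i)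
    (i₀ : ι)
    (Li : GLat (W i₀)) (jᵢ : Li.carrier →+ V i₀)
    (hinjᵢ : Function.Injective jᵢ)
    (hequiᵢ : ∀ (g : W i₀) (y : Li.carrier), jᵢ (g • y) = g • jᵢ y)
    (hrangeᵢ : ∀ y : V i₀, (∃ z : Li.carrier, jᵢ z = y) ↔ Pi.single i₀ y ∈ Set.range j)
    (hqp : LG.IsQuasiPermutation) :
    Li.IsQuasiPermutation := by
  obtain ⟨k, hk, hmem⟩ := exists_addMonoidHom_single_of_mem_range hinj hrangeᵢ
  have hkinj : Function.Injective k := fun z w h =>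
    hinjᵢ (Pi.single_injective i₀ (by rw [← hk, ← hk, h]))
  have hke (γ : W i₀) (z : Li) : k (γ • z) = Pi.mulSingle i₀ γ • k z := by
    apply hinj
    rw [hk, hequi, hequiᵢ, hk]
    funext i
    rcases eq_or_ne i i₀ with rfl | hi
    · simp
    · simp [hi]
  have hsat : k.range.NSMulSaturated := by
    have (i : ι) : IsAddTorsionFree (V i) := .of_module_rat (V i)
    intro n x hx
    refine or_iff_not_imp_left.mpr fun hn => (hmem x).mpr fun i hi => ?_
    have hnx : n • j x i = 0 := by simpa using (hmem _).mp hx i hi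
    exact (smul_eq_zero.mp hnx).resolve_left hn
  have hfix (γ : W i₀) (x : LG) : Pi.mulSingle i₀ γ • x - x ∈ k.range :=
    (hmem _).mpr fun i hi => by simp [hequi, hi]
  exact (hqp.restrict (MonoidHom.mulSingle W i₀)).of_injective k hkinj hke hsat hfix

/-- Let `W₁, …, W_m` be finite groups, `V_i` a finite-dimensional `ℚ`-representation of
`W_i`, and `V = ⊕ V_i` with the componentwise action of `W = W₁ × ⋯ × W_m`.  Let `L ⊂ V`
be a `W`-invariant lattice (realized by a `W`-lattice `LG` with an injective equivariant
map `j` into `V`).  If `L` is a quasi-permutation `W`-lattice, then for each `i` the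
intersection `L_i = L ∩ V_i` (realized by a `W_i`-lattice `Li` with an injective
equivariant map `jᵢ` into `V_i` whose range is `{y : y ∈ V_i, y ∈ L}`) is a
quasi-permutation `W_i`-lattice. -/
theorem component_quasiPermutation {ι : Type u} [Fintype ι] [DecidableEq ι]
    (W : ι → Type u) [∀ i, Group (W i)] [∀ i, Fintype (W i)]
    (V : ι → Type u) [∀ i, AddCommGroup (V i)] [∀ i, Module ℚ (V i)]
    [∀ i, FiniteDimensional ℚ (V i)] [∀ i, DistribMulAction (W i) (V i)]
    (LG : GLat (∀ i, W i)) (j : LG.carrier →+ (∀ i, V i))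
    (hinj : Function.Injective j)
    (hequi : ∀ (w : ∀ i, W i) (x : LG.carrier), j (w • x) = fun i => w i • j x i)
    (i₀ : ι)
    (Li : GLat (W i₀)) (jᵢ : Li.carrier →+ V i₀)
    (hinjᵢ : Function.Injective jᵢ)
    (hequiᵢ : ∀ (g : W i₀) (y : Li.carrier), jᵢ (g • y) = g • jᵢ y)
    (hrangeᵢ : ∀ y : V i₀, (∃ z : Li.carrier, jᵢ z = y) ↔ Pi.single i₀ y ∈ Set.range j)
    (hqp : LG.IsQuasiPermutation) :
    Li.IsQuasiPermutation :=
  component_quasiPermutation_general W V LG j hinj hequi i₀ Li jᵢ hinjᵢ hequiᵢ hrangeᵢ hqp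
end
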